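/- arXiv:0804.0230 — 9 statements merged into one kernel-verified Lean document; each statement's English description precedes it below -/
import Mathlib

section
/- If L : X × X* → ℝ ∪ {+∞} is a proper convex lower semicontinuous Lagrangian on a reflexive Banach space X and its dual, satisfying L(x,p) ≥ ⟨x,p⟩ for all (x,p), then for any x, if p ∈ ∂̄L(x) (i.e., L(x,p) = ⟨x,p⟩) then (p,x) ∈ ∂L(x,p), i.e., p ∈ δL(x). -/
/-!
Write `z₀ = (x, p)`, `z = (y, q)` and `⟨(u, r)⟩ = r u`. Along the segment `z₀ + t (z - z₀)` the
pairing is the quadratic `⟨z₀⟩ + t B + t² C` with `B = p (y - x) + (q - p) x`, while convexity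
bounds `L` by `⟨z₀⟩ + t (L z - ⟨z₀⟩)`, since `L z₀ = ⟨z₀⟩`. As `L ≥ ⟨·⟩`, dividing by `t` and
letting `t → 0⁺` gives `⟨z₀⟩ + B ≤ L z`.
-/

open Filter Topology

theorem le_of_forall_add_mul_le {b c d : ℝ} (h : ∀ t : ℝ, 0 < t → t ≤ 1 → b + t * c ≤ d) :
    b ≤ d := by
  have hlim : Tendsto (fun t : ℝ => b + t * c) (𝓝[>] 0) (𝓝 b) := by
    simpa using (tendsto_const_nhds.add (tendsto_id.mul_const c)).mono_left
      (nhdsWithin_le_nhds (a := (0 : ℝ)) (s := Set.Ioi 0))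
  refine le_of_tendsto hlim ?_
  filter_upwards [Ioc_mem_nhdsGT one_pos] with t ht using h t ht.1 ht.2

theorem StrongDual.apply_convexCombination {X : Type*} [NormedAddCommGroup X] [NormedSpace ℝ X]
    (x y : X) (p q : StrongDual ℝ X) (t : ℝ) :
    (t • q + (1 - t) • p) (t • y + (1 - t) • x)
      = p x + t * (p (y - x) + (q - p) x) + t ^ 2 * (q - p) (y - x) := by
  simp only [add_apply, smul_apply, sub_apply, map_add, map_smul, map_sub, smul_eq_mul]
  ring

theorem stmt0_general {X : Type*} [NormedAddCommGroup X] [NormedSpace ℝ X]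
    (L : X × StrongDual ℝ X → EReal)
    (hconv : ∀ a b : X × StrongDual ℝ X, ∀ t : ℝ, 0 ≤ t → t ≤ 1 →
      L (t • a + (1 - t) • b) ≤ (t : EReal) * L a + ((1 - t : ℝ) : EReal) * L b)
    (hge : ∀ x p, ((p x : ℝ) : EReal) ≤ L (x, p))
    (x : X) (p : StrongDual ℝ X)
    (hp : L (x, p) = ((p x : ℝ) : EReal)) :
    ∀ y q, L (x, p) + ((p (y - x) + (q - p) x : ℝ) : EReal) ≤ L (y, q) := by
  intro y q
  rcases eq_top_or_lt_top (L (y, q)) with hT | hT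
  · simp [hT]
  obtain ⟨M, hM⟩ : ∃ M : ℝ, L (y, q) = M :=
    ⟨_, (EReal.coe_toReal hT.ne (ne_bot_of_le_ne_bot (EReal.coe_ne_bot _) (hge y q))).symm⟩
  have hsegment : ∀ t : ℝ, 0 < t → t ≤ 1 →
      p x + t * (p (y - x) + (q - p) x) + t ^ 2 * (q - p) (y - x) ≤ t * M + (1 - t) * p x := by
    intro t ht0 ht1
    rw [← StrongDual.apply_convexCombination, ← EReal.coe_le_coe_iff]
    calc _ ≤ L (t • (y, q) + (1 - t) • (x, p)) := hge _ _
      _ ≤ (t : EReal) * L (y, q) + ((1 - t : ℝ) : EReal) * L (x, p) := hconv _ _ t ht0.le ht1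
      _ = _ := by rw [hM, hp]; norm_cast
  rw [hp, hM, ← EReal.coe_add, EReal.coe_le_coe_iff, ← le_sub_iff_add_le']
  refine le_of_forall_add_mul_le (c := (q - p) (y - x)) fun t ht0 ht1 =>
    le_of_mul_le_mul_left ?_ ht0
  linear_combination hsegment t ht0 ht1

/-- For a proper convex lsc Lagrangian `L` on `X × X*` with
`L(x,p) ≥ ⟨x,p⟩`, if `p ∈ ∂̄L(x)` (i.e. `L(x,p) = ⟨x,p⟩`) then `(p,x) ∈ ∂L(x,p)`,
i.e. `p ∈ δL(x)`. -/
theorem stmt0 {X : Type*} [NormedAddCommGroup X] [NormedSpace ℝ X] [CompleteSpace X]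
    (hrefl : Function.Surjective (NormedSpace.inclusionInDoubleDual ℝ X))
    (L : X × StrongDual ℝ X → EReal)
    (hproper : (∃ z, L z ≠ ⊤) ∧ ∀ z, L z ≠ ⊥)
    (hconv : ∀ a b : X × StrongDual ℝ X, ∀ t : ℝ, 0 ≤ t → t ≤ 1 →
      L (t • a + (1 - t) • b) ≤ (t : EReal) * L a + ((1 - t : ℝ) : EReal) * L b)
    (hlsc : LowerSemicontinuous L)
    (hge : ∀ x p, ((p x : ℝ) : EReal) ≤ L (x, p))
    (x : X) (p : StrongDual ℝ X)
    (hp : L (x, p) = ((p x : ℝ) : EReal)) :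
    ∀ y q, L (x, p) + ((p (y - x) + (q - p) x : ℝ) : EReal) ≤ L (y, q) :=
  stmt0_general L hconv hge x p hp
end

section
/- For any proper convex lsc Lagrangian L on X × X*, the set-valued map x ↦ δL(x) = {p : (p,x) ∈ ∂L(x,p)} is monotone: if p ∈ δL(x) and q ∈ δL(y) then ⟨p − q, x − y⟩ ≥ 0. -/
open NormedSpace

/-!
Test the subgradient inequality of `(x, p)` at `(y, q)` and that of `(y, q)` at `(x, p)`, and add
them. The linear terms add up to `-2 (p - q) (x - y)`, and the values of `L` cancel because
`L (x, p)` is finite: the subgradient inequality bounds it by a finite value of the proper `L`.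
-/

theorem EReal.ne_top_of_forall_add_coe_le {α : Type*} {f : α → EReal} {a : EReal} {c : α → ℝ}
    (hf : ∃ z, f z ≠ ⊤) (h : ∀ z, a + c z ≤ f z) : a ≠ ⊤ := by
  obtain ⟨z, hz⟩ := hf
  rintro rfl
  exact hz (top_le_iff.mp (EReal.top_add_coe (c z) ▸ h z))

theorem EReal.add_le_zero_of_add_coe_le_of_add_coe_le {a b : EReal} {s t : ℝ}
    (ha : a ≠ ⊥) (ha' : a ≠ ⊤) (hab : a + s ≤ b) (hba : b + t ≤ a) : s + t ≤ 0 := by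
  lift a to ℝ using ⟨ha', ha⟩
  have : ((a + s + t : ℝ) : EReal) ≤ a :=
    calc ((a + s + t : ℝ) : EReal) = (a + s : EReal) + t := by norm_cast
      _ ≤ b + t := by gcongr
      _ ≤ a := hba
  linarith [EReal.coe_le_coe_iff.mp this]

theorem stmt3_general {X : Type*} [NormedAddCommGroup X] [NormedSpace ℝ X]
    (L : X × StrongDual ℝ X → EReal)
    (hproper : (∃ z, L z ≠ ⊤) ∧ ∀ z, L z ≠ ⊥)
    (x y : X) (p q : StrongDual ℝ X)
    (hx : ∀ z r, L (x, p) + ((p (z - x) + (r - p) x : ℝ) : EReal) ≤ L (z, r))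
    (hy : ∀ z r, L (y, q) + ((q (z - y) + (r - q) y : ℝ) : EReal) ≤ L (z, r)) :
    0 ≤ (p - q) (x - y) := by
  obtain ⟨hfinite, hbot⟩ := hproper
  have hxp_ne_top : L (x, p) ≠ ⊤ :=
    EReal.ne_top_of_forall_add_coe_le hfinite fun z : X × StrongDual ℝ X => hx z.1 z.2
  have key := EReal.add_le_zero_of_add_coe_le_of_add_coe_le (hbot _) hxp_ne_top (hx y q) (hy x p)
  simp only [map_sub, sub_apply] at key ⊢
  linarith

/-- For a proper convex lsc Lagrangian `L` on `X × X*`, the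
set-valued map `x ↦ δL(x) = {p : (p,x) ∈ ∂L(x,p)}` is monotone. -/
theorem stmt3 {X : Type*} [NormedAddCommGroup X] [NormedSpace ℝ X] [CompleteSpace X]
    (hrefl : Function.Surjective (NormedSpace.inclusionInDoubleDual ℝ X))
    (L : X × StrongDual ℝ X → EReal)
    (hproper : (∃ z, L z ≠ ⊤) ∧ ∀ z, L z ≠ ⊥)
    (hconv : ∀ a b : X × StrongDual ℝ X, ∀ t : ℝ, 0 ≤ t → t ≤ 1 →
      L (t • a + (1 - t) • b) ≤ (t : EReal) * L a + ((1 - t : ℝ) : EReal) * L b)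
    (hlsc : LowerSemicontinuous L)
    (x y : X) (p q : StrongDual ℝ X)
    (hx : ∀ z r, L (x, p) + ((p (z - x) + (r - p) x : ℝ) : EReal) ≤ L (z, r))
    (hy : ∀ z r, L (y, q) + ((q (z - y) + (r - q) y : ℝ) : EReal) ≤ L (z, r)) :
    0 ≤ (p - q) (x - y) :=
  stmt3_general L hproper x y p q hx hy
end

section
/- Let L be a proper convex lsc selfdual Lagrangian on a reflexive Banach space X × X* such that for some x₀ ∈ X, the function p ↦ L(x₀,p) is bounded on bounded subsets of X*. Then for each p ∈ X* there exists x̄ ∈ X with L(x̄,p) − ⟨x̄,p⟩ = inf_{x ∈ X} (L(x,p) − ⟨x,p⟩) = 0, and hence p ∈ ∂̄L(x̄). -/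
/-!
Selfduality gives the Fenchel–Young inequality `⟨x, q⟩ ≤ L(x, q)`, so the value function
`h(q) = inf_x (L(x, p + q) - ⟨x, p⟩)` is nonnegative. It is convex, and bounded above near `0`
because `L(x₀, ·)` is bounded on bounded sets, so its strict epigraph is a convex set containing
the interior points `(0, t)`, `t` large, but not `(0, 0)`. Separating, and using reflexivity,
gives `x̄` with `⟨x̄, q⟩ ≤ h(q)` for all `q`, and then
`L(x̄, p) = L*(p, x̄) = sup_{y,q} (⟨y, p⟩ + ⟨x̄, q⟩ - L(y, q)) ≤ ⟨x̄, p⟩`.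
-/

open NormedSpace

/-- Legendre transform of a Lagrangian in both variables. -/
noncomputable def LagConj {X : Type*} [NormedAddCommGroup X] [NormedSpace ℝ X]
    (L : X × StrongDual ℝ X → EReal) (p : StrongDual ℝ X) (u : X) : EReal :=
  ⨆ yq : X × StrongDual ℝ X, (((p yq.1) + (yq.2 u) : ℝ) : EReal) - L yq

theorem EReal.le_of_coe_two_mul_sub_le {a : ℝ} {b : EReal} (h : ((2 * a : ℝ) : EReal) - b ≤ b) :
    (a : EReal) ≤ b := by
  induction b using EReal.rec with
  | bot => rw [EReal.coe_sub_bot, top_le_iff] at h; exact absurd h bot_ne_top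
  | coe b =>
    rw [← EReal.coe_sub, EReal.coe_le_coe_iff] at h
    exact EReal.coe_le_coe_iff.2 (by linarith)
  | top => exact le_top

theorem EReal.coe_mul_add_coe_mul_lt {a b : EReal} {s u t : ℝ} (ha : a < s) (hb : b < u)
    (ha' : a ≠ ⊥) (hb' : b ≠ ⊥) (ht₀ : 0 ≤ t) (ht₁ : t ≤ 1) :
    (t : EReal) * a + ((1 - t : ℝ) : EReal) * b < ((t * s + (1 - t) * u : ℝ) : EReal) := by
  lift a to ℝ using ⟨ha.ne_top, ha'⟩
  lift b to ℝ using ⟨hb.ne_top, hb'⟩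
  rw [EReal.coe_lt_coe_iff] at ha hb
  rw [← EReal.coe_mul, ← EReal.coe_mul, ← EReal.coe_add, EReal.coe_lt_coe_iff]
  rcases ht₀.eq_or_lt with rfl | ht₀
  · linarith
  · nlinarith [mul_le_mul_of_nonneg_left hb.le (_root_.sub_nonneg.2 ht₁)]

theorem Convex.exists_strongDual_apply_fst_le_snd {F : Type*} [NormedAddCommGroup F]
    [NormedSpace ℝ F] {S : Set (F × ℝ)} (hS : Convex ℝ S)
    (h0 : ((0 : F), (0 : ℝ)) ∉ interior S) {t₀ : ℝ} (ht₀ : 0 < t₀)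
    (hint : ((0 : F), t₀) ∈ interior S) :
    ∃ φ : StrongDual ℝ F, ∀ z ∈ S, φ z.1 ≤ z.2 := by
  obtain ⟨f, hf⟩ := geometric_hahn_banach_open_point hS.interior isOpen_interior h0
  simp only [Prod.mk_zero_zero, map_zero] at hf
  have hfS : ∀ z ∈ S, f z ≤ 0 := by
    refine fun z hz ↦ closure_minimal (fun w hw ↦ (hf w hw).le)
      (isClosed_Iic.preimage f.continuous) ?_
    rw [hS.closure_interior_eq_closure_of_nonempty_interior ⟨_, hint⟩]
    exact subset_closure hz
  have hsplit : ∀ z : F × ℝ, f z = f (z.1, 0) + z.2 * f (0, 1) := fun z ↦ by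
    rw [← smul_eq_mul, ← map_smul, ← map_add, Prod.smul_mk, smul_zero, smul_eq_mul, mul_one,
      Prod.mk_add_mk, add_zero, zero_add]
  have hα : f (0, 1) < 0 := by
    have hft₀ := hf _ hint
    rw [hsplit, Prod.mk_zero_zero, map_zero, zero_add] at hft₀
    exact neg_of_mul_neg_right hft₀ ht₀.le
  refine ⟨(-f (0, 1))⁻¹ • f.comp (ContinuousLinearMap.inl ℝ F ℝ), fun z hz ↦ ?_⟩
  have hfz := hfS z hz
  rw [hsplit] at hfz
  change (-f (0, 1))⁻¹ * f (z.1, 0) ≤ z.2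
  rw [inv_mul_le_iff₀ (by linarith)]
  linarith

section Lagrangian

variable {X : Type*} [NormedAddCommGroup X] [NormedSpace ℝ X]

theorem apply_le_of_lagConj_eq {L : X × StrongDual ℝ X → EReal} {x : X} {q : StrongDual ℝ X}
    (h : LagConj L q x = L (x, q)) : ((q x : ℝ) : EReal) ≤ L (x, q) := by
  refine EReal.le_of_coe_two_mul_sub_le ?_
  rw [two_mul]
  exact (le_iSup (fun yq : X × StrongDual ℝ X ↦ ((q yq.1 + yq.2 x : ℝ) : EReal) - L yq)
    (x, q)).trans_eq h

/-- The strict epigraph of the value function `q ↦ inf_x (L(x, p + q) - ⟨x, p⟩)`. -/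
def valueStrictEpigraph (L : X × StrongDual ℝ X → EReal) (p : StrongDual ℝ X) :
    Set (StrongDual ℝ X × ℝ) :=
  {z | ∃ x, L (x, p + z.1) < ((p x + z.2 : ℝ) : EReal)}

variable {L : X × StrongDual ℝ X → EReal} {p : StrongDual ℝ X}

theorem convex_valueStrictEpigraph (hbot : ∀ z, L z ≠ ⊥)
    (hconv : ∀ a b : X × StrongDual ℝ X, ∀ t : ℝ, 0 ≤ t → t ≤ 1 →
      L (t • a + (1 - t) • b) ≤ (t : EReal) * L a + ((1 - t : ℝ) : EReal) * L b) :
    Convex ℝ (valueStrictEpigraph L p) := by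
  rintro ⟨q₁, t₁⟩ ⟨x₁, h₁⟩ ⟨q₂, t₂⟩ ⟨x₂, h₂⟩ a b ha hb hab
  obtain rfl : b = 1 - a := by linarith
  refine ⟨a • x₁ + (1 - a) • x₂, ?_⟩
  have hpoint : (a • x₁ + (1 - a) • x₂, p + (a • (q₁, t₁) + (1 - a) • (q₂, t₂)).1)
      = a • (x₁, p + q₁) + (1 - a) • (x₂, p + q₂) := by
    refine Prod.ext rfl ?_
    simp only [Prod.smul_mk, Prod.mk_add_mk]
    module
  have hval : p (a • x₁ + (1 - a) • x₂) + (a • (q₁, t₁) + (1 - a) • (q₂, t₂)).2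
      = a * (p x₁ + t₁) + (1 - a) * (p x₂ + t₂) := by
    simp only [map_add, map_smul, Prod.snd_add, Prod.smul_snd, smul_eq_mul]
    ring
  rw [hpoint, hval]
  exact (hconv _ _ a ha (by linarith)).trans_lt
    (EReal.coe_mul_add_coe_mul_lt h₁ h₂ (hbot _) (hbot _) ha (by linarith))

theorem zero_notMem_interior_valueStrictEpigraph (hp : ∀ x, ((p x : ℝ) : EReal) ≤ L (x, p)) :
    ((0 : StrongDual ℝ X), (0 : ℝ)) ∉ interior (valueStrictEpigraph L p) := fun h ↦ by
  obtain ⟨x, hx⟩ := interior_subset h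
  simp only [add_zero] at hx
  exact (hp x).not_gt hx

theorem zero_mem_interior_valueStrictEpigraph {x₀ : X} {C : ℝ}
    (hC : ∀ q : StrongDual ℝ X, ‖q‖ ≤ ‖p‖ + 1 → L (x₀, q) ≤ (C : EReal)) {t : ℝ}
    (ht : C - p x₀ < t) : ((0 : StrongDual ℝ X), t) ∈ interior (valueStrictEpigraph L p) := by
  refine interior_maximal (t := Metric.ball 0 1 ×ˢ Set.Ioi (C - p x₀)) ?_
    (Metric.isOpen_ball.prod isOpen_Ioi) ⟨Metric.mem_ball_self one_pos, ht⟩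
  rintro ⟨q, s⟩ ⟨hq, hs⟩
  refine ⟨x₀, (hC _ ?_).trans_lt (EReal.coe_lt_coe_iff.2 ?_)⟩
  · rw [mem_ball_zero_iff] at hq
    linarith [norm_add_le p q]
  · simp only [Set.mem_Ioi] at hs
    linarith

theorem lagConj_le_of_forall_mem_valueStrictEpigraph {x : X}
    (h : ∀ z ∈ valueStrictEpigraph L p, z.1 x ≤ z.2) : LagConj L p x ≤ ((p x : ℝ) : EReal) := by
  refine iSup_le fun ⟨y, q⟩ ↦ EReal.sub_le_of_le_add ?_
  have hq : ((q x - p x + p y : ℝ) : EReal) ≤ L (y, q) := by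
    refine EReal.le_of_forall_lt_iff_le.1 fun s hs ↦ EReal.coe_le_coe_iff.2 ?_
    have hle := h (q - p, s - p y) ⟨y, by simpa using hs⟩
    rw [sub_apply] at hle
    linarith
  calc ((p y + q x : ℝ) : EReal) = ((p x : ℝ) : EReal) + ((q x - p x + p y : ℝ) : EReal) := by
        rw [← EReal.coe_add]; ring_nf
    _ ≤ ((p x : ℝ) : EReal) + L (y, q) := by gcongr

end Lagrangian

theorem stmt4_general {X : Type*} [NormedAddCommGroup X] [NormedSpace ℝ X]
    (hrefl : Function.Surjective (NormedSpace.inclusionInDoubleDual ℝ X))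
    (L : X × StrongDual ℝ X → EReal)
    (hproper : (∃ z, L z ≠ ⊤) ∧ ∀ z, L z ≠ ⊥)
    (hconv : ∀ a b : X × StrongDual ℝ X, ∀ t : ℝ, 0 ≤ t → t ≤ 1 →
      L (t • a + (1 - t) • b) ≤ (t : EReal) * L a + ((1 - t : ℝ) : EReal) * L b)
    (hself : ∀ x p, LagConj L p x = L (x, p))
    (x₀ : X) (hbdd : ∀ r : ℝ, ∃ C : ℝ, ∀ p : StrongDual ℝ X, ‖p‖ ≤ r → L (x₀, p) ≤ (C : EReal)) :
    ∀ p : StrongDual ℝ X, ∃ xb : X,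
      L (xb, p) = ((p xb : ℝ) : EReal) ∧ ∀ x : X, ((p x : ℝ) : EReal) ≤ L (x, p) := by
  intro p
  have hFY : ∀ x, ((p x : ℝ) : EReal) ≤ L (x, p) := fun x ↦ apply_le_of_lagConj_eq (hself x p)
  obtain ⟨C, hC⟩ := hbdd (‖p‖ + 1)
  obtain ⟨φ, hφ⟩ :=
    (convex_valueStrictEpigraph (p := p) hproper.2 hconv).exists_strongDual_apply_fst_le_snd
    (zero_notMem_interior_valueStrictEpigraph hFY) (by positivity : 0 < |C - p x₀| + 1)
    (zero_mem_interior_valueStrictEpigraph hC (by linarith [le_abs_self (C - p x₀)]))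
  obtain ⟨xb, rfl⟩ := hrefl φ
  refine ⟨xb, le_antisymm ?_ (hFY xb), hFY⟩
  rw [← hself]
  exact lagConj_le_of_forall_mem_valueStrictEpigraph hφ

/-- If `L` is a proper convex lsc selfdual Lagrangian such that for
some `x₀` the map `p ↦ L(x₀,p)` is bounded on bounded sets, then for each `p`
there is `xb` with `L(xb,p) − ⟨xb,p⟩ = inf_x (L(x,p) − ⟨x,p⟩) = 0`, i.e.
`L(xb,p) = ⟨xb,p⟩` and `L(x,p) ≥ ⟨x,p⟩` for all `x`; hence `p ∈ ∂̄L(xb)`. -/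
theorem stmt4 {X : Type*} [NormedAddCommGroup X] [NormedSpace ℝ X] [CompleteSpace X]
    (hrefl : Function.Surjective (NormedSpace.inclusionInDoubleDual ℝ X))
    (L : X × StrongDual ℝ X → EReal)
    (hproper : (∃ z, L z ≠ ⊤) ∧ ∀ z, L z ≠ ⊥)
    (hconv : ∀ a b : X × StrongDual ℝ X, ∀ t : ℝ, 0 ≤ t → t ≤ 1 →
      L (t • a + (1 - t) • b) ≤ (t : EReal) * L a + ((1 - t : ℝ) : EReal) * L b)
    (hlsc : LowerSemicontinuous L)
    (hself : ∀ x p, LagConj L p x = L (x, p))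
    (x₀ : X) (hbdd : ∀ r : ℝ, ∃ C : ℝ, ∀ p : StrongDual ℝ X, ‖p‖ ≤ r → L (x₀, p) ≤ (C : EReal)) :
    ∀ p : StrongDual ℝ X, ∃ xb : X,
      L (xb, p) = ((p xb : ℝ) : EReal) ∧ ∀ x : X, ((p x : ℝ) : EReal) ≤ L (x, p) :=
  stmt4_general hrefl L hproper hconv hself x₀ hbdd
end

section
/- If L is a proper selfdual Lagrangian on a reflexive Banach space X × X*, then the vector field x ↦ ∂̄L(x) = {p : L(x,p) = ⟨x,p⟩} is a maximal monotone operator. -/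
/-!
The graph is monotone because `L (x, p) = L* (p, x) ≥ ⟨p, y⟩ + ⟨q, x⟩ - L (y, q)`.

For maximality fix `(x, p)` monotonically related to the graph `{L (y, q) = ⟨q, y⟩}`.
Selfduality gives `L (y, q) ≥ ⟨q, y⟩`, so `L` lies above the continuous concave function
`g (y, q) = ⟨q, y⟩ - ⟨q - p, y - x⟩ - ½‖y - x‖² - ½‖q - p‖²`. Hahn–Banach separation of the
epigraph of `L` from the strict hypograph of `g` yields a continuous affine function between
them; by reflexivity its linear part is `(y, q) ↦ ⟨R, y⟩ + ⟨q, z⟩`. Selfduality turns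
`affine ≤ L` into an upper bound for `L (z, R)`, and `g ≤ affine` (after computing the
conjugate of `½‖·‖²`) into a lower one, so that `(z, R)` lies on the graph with
`½‖z - x‖² + ½‖R - p‖² ≤ ⟨p - R, z - x⟩`. Monotonicity makes the right-hand side nonpositive,
hence `(z, R) = (x, p)`.
-/

open NormedSpace

open Set

theorem convex_epigraph_of_map_combo_le {E : Type*} [AddCommGroup E] [Module ℝ E]
    {f : E → EReal}
    (hf : ∀ a b : E, ∀ t : ℝ, 0 ≤ t → t ≤ 1 →
      f (t • a + (1 - t) • b) ≤ (t : EReal) * f a + ((1 - t : ℝ) : EReal) * f b) :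
    Convex ℝ {et : E × ℝ | f et.1 ≤ et.2} := by
  rintro ⟨e₁, t₁⟩ h₁ ⟨e₂, t₂⟩ h₂ a b ha hb hab
  obtain rfl : b = 1 - a := by linarith
  calc f (a • e₁ + (1 - a) • e₂)
        ≤ (a : EReal) * f e₁ + ((1 - a : ℝ) : EReal) * f e₂ := hf e₁ e₂ a ha (by linarith)
    _ ≤ (a : EReal) * t₁ + ((1 - a : ℝ) : EReal) * t₂ := by
        gcongr
        exacts [h₁, h₂]
    _ = ((a • (e₁, t₁) + (1 - a) • (e₂, t₂)).2 : ℝ) := by simp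

theorem exists_affine_between_of_concave_le_convex {E : Type*} [TopologicalSpace E]
    [AddCommGroup E] [Module ℝ E] [IsTopologicalAddGroup E] [ContinuousSMul ℝ E]
    {f : E → EReal} {g : E → ℝ}
    (hf : Convex ℝ {et : E × ℝ | f et.1 ≤ et.2}) (hfin : ∃ e, f e ≠ ⊤)
    (hg : ConcaveOn ℝ univ g) (hgc : Continuous g) (hgf : ∀ e, (g e : EReal) ≤ f e) :
    ∃ (φ : StrongDual ℝ E) (c : ℝ),
      (∀ e (t : ℝ), f e ≤ t → φ e + c ≤ t) ∧ ∀ e, g e ≤ φ e + c := by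
  have hopen : IsOpen {et : E × ℝ | et.1 ∈ univ ∧ et.2 < g et.1} := by
    simpa using isOpen_lt continuous_snd (hgc.comp continuous_fst)
  have hdisj : Disjoint {et : E × ℝ | et.1 ∈ univ ∧ et.2 < g et.1} {et | f et.1 ≤ et.2} :=
    Set.disjoint_left.2 fun et hlt hle =>
      hlt.2.not_ge (EReal.coe_le_coe_iff.1 ((hgf et.1).trans hle))
  obtain ⟨ψ, u, hψB, hψA⟩ :=
    geometric_hahn_banach_open hg.convex_strict_hypograph hopen hf hdisj
  set s := ψ (0, 1)
  have hψ : ∀ e t, ψ (e, t) = ψ (e, 0) + t * s := fun e t => by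
    rw [show (e, t) = (e, (0 : ℝ)) + t • ((0 : E), (1 : ℝ)) by simp, map_add, map_smul,
      smul_eq_mul]
  obtain ⟨e₀, he₀⟩ := hfin
  obtain ⟨t₀, ht₀⟩ : ∃ t₀ : ℝ, f e₀ = t₀ := ⟨(f e₀).toReal,
    (EReal.coe_toReal he₀ (ne_bot_of_le_ne_bot (EReal.coe_ne_bot _) (hgf e₀))).symm⟩
  -- the hyperplane is not vertical: `ψ` separates two points of the vertical line through `e₀`
  have hs : 0 < s := by
    have hA := hψA (e₀, t₀) ht₀.le
    have hB := hψB (e₀, min t₀ (g e₀) - 1)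
      ⟨mem_univ _, by linarith [min_le_right t₀ (g e₀)]⟩
    rw [hψ] at hA hB
    nlinarith [min_le_left t₀ (g e₀)]
  refine ⟨-s⁻¹ • ψ.comp (.inl ℝ E ℝ), u / s, fun e t het => ?_,
    fun e => le_of_forall_lt fun t ht => ?_⟩
  all_goals simp only [smul_apply, ContinuousLinearMap.comp_apply, ContinuousLinearMap.inl_apply,
    smul_eq_mul]
  · have hA := hψA (e, t) het
    rw [hψ] at hA
    field_simp
    linarith
  · have hB := hψB (e, t) ⟨mem_univ _, ht⟩
    rw [hψ] at hB
    field_simp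
    linarith

theorem abs_apply_le_half_sq_add_half_sq {Y : Type*} [SeminormedAddCommGroup Y]
    [NormedSpace ℝ Y] (q : StrongDual ℝ Y) (y : Y) : |q y| ≤ ‖y‖ ^ 2 / 2 + ‖q‖ ^ 2 / 2 := by
  have := q.le_opNorm y
  rw [Real.norm_eq_abs] at this
  nlinarith [sq_nonneg (‖y‖ - ‖q‖)]

theorem half_sq_opNorm_le {Y : Type*} [SeminormedAddCommGroup Y] [NormedSpace ℝ Y]
    (f : StrongDual ℝ Y) {M : ℝ} (h : ∀ y, f y - ‖y‖ ^ 2 / 2 ≤ M) : ‖f‖ ^ 2 / 2 ≤ M := by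
  have hM : 0 ≤ M := by simpa using h 0
  suffices ‖f‖ ≤ √(2 * M) by
    nlinarith [Real.sq_sqrt (by positivity : 0 ≤ 2 * M), norm_nonneg f]
  refine f.opNorm_le_bound' (Real.sqrt_nonneg _) fun y hy => ?_
  have hy2 : 0 < ‖y‖ ^ 2 := by positivity
  -- the maximiser of `t ↦ t * f y - t ^ 2 * ‖y‖ ^ 2 / 2`
  have key := h ((f y / ‖y‖ ^ 2) • y)
  rw [map_smul, smul_eq_mul, norm_smul, Real.norm_eq_abs, mul_pow, sq_abs] at key
  have : (f y) ^ 2 ≤ 2 * M * ‖y‖ ^ 2 := by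
    field_simp at key
    nlinarith
  rw [Real.norm_eq_abs, ← Real.sqrt_sq (norm_nonneg y), ← Real.sqrt_mul (by positivity)]
  exact Real.abs_le_sqrt this

theorem half_sq_opNorm_add_half_sq_opNorm_le {Y Z : Type*} [SeminormedAddCommGroup Y]
    [NormedSpace ℝ Y] [SeminormedAddCommGroup Z] [NormedSpace ℝ Z]
    (f : StrongDual ℝ Y) (g : StrongDual ℝ Z) {M : ℝ}
    (h : ∀ y z, f y - ‖y‖ ^ 2 / 2 + (g z - ‖z‖ ^ 2 / 2) ≤ M) :
    ‖f‖ ^ 2 / 2 + ‖g‖ ^ 2 / 2 ≤ M := by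
  have hf : ∀ y, f y - ‖y‖ ^ 2 / 2 ≤ M - ‖g‖ ^ 2 / 2 := fun y => by
    have := half_sq_opNorm_le g (M := M - (f y - ‖y‖ ^ 2 / 2)) fun z => by linarith [h y z]
    linarith
  linarith [half_sq_opNorm_le f hf]

theorem convexOn_univ_sq_norm_sub {Y : Type*} [SeminormedAddCommGroup Y] [NormedSpace ℝ Y]
    (a : Y) :
    ConvexOn ℝ univ fun y : Y => ‖y - a‖ ^ 2 := by
  simpa [sub_eq_neg_add, Function.comp_def] using
    (convexOn_univ_norm.pow (fun _ _ => norm_nonneg _) 2).translate_right (-a)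

theorem concaveOn_affine_sub_half_sq_norm_sub {X : Type*} [NormedAddCommGroup X]
    [NormedSpace ℝ X] (x : X) (p : StrongDual ℝ X) :
    ConcaveOn ℝ univ fun e : X × StrongDual ℝ X =>
      p e.1 + e.2 x - p x - (‖e.1 - x‖ ^ 2 + ‖e.2 - p‖ ^ 2) / 2 := by
  have hlin : ConcaveOn ℝ univ fun e : X × StrongDual ℝ X => p e.1 + e.2 x :=
    ((p.toLinearMap.comp (LinearMap.fst ℝ X _)) +
      ((ContinuousLinearMap.apply ℝ ℝ x).toLinearMap.comp (LinearMap.snd ℝ X _))).concaveOn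
        convex_univ
  have hsq : ConvexOn ℝ univ fun e : X × StrongDual ℝ X =>
      ‖e.1 - x‖ ^ 2 + ‖e.2 - p‖ ^ 2 :=
    ((convexOn_univ_sq_norm_sub x).comp_linearMap (LinearMap.fst ℝ X _)).add
      ((convexOn_univ_sq_norm_sub p).comp_linearMap (LinearMap.snd ℝ X _))
  refine ((hlin.add_const (-p x)).sub (hsq.smul (by norm_num : (0 : ℝ) ≤ 1 / 2))).congr
    fun e _ => ?_
  simp only [one_div, smul_eq_mul, Pi.sub_apply, Pi.add_apply]
  ring

section Selfdual

variable {X : Type*} [NormedAddCommGroup X] [NormedSpace ℝ X] {L : X × StrongDual ℝ X → EReal}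

def IsSelfdual (L : X × StrongDual ℝ X → EReal) : Prop :=
  ∀ x p, LagConj L p x = L (x, p)

theorem le_lagConj (L : X × StrongDual ℝ X → EReal) (p : StrongDual ℝ X) (u y : X)
    (q : StrongDual ℝ X) : ((p y + q u : ℝ) : EReal) - L (y, q) ≤ LagConj L p u :=
  le_iSup (fun yq : X × StrongDual ℝ X => ((p yq.1 + yq.2 u : ℝ) : EReal) - L yq) (y, q)

theorem lagConj_le {p : StrongDual ℝ X} {u : X} {b : ℝ} (hbot : ∀ e, L e ≠ ⊥)
    (h : ∀ y q (t : ℝ), L (y, q) ≤ t → p y + q u - t ≤ b) : LagConj L p u ≤ b := by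
  refine iSup_le fun ⟨y, q⟩ => ?_
  induction hL : L (y, q) with
  | bot => exact absurd hL (hbot _)
  | coe t => exact_mod_cast h y q t hL.le
  | top => simp

theorem IsSelfdual.apply_le (hL : IsSelfdual L) {y : X} {q : StrongDual ℝ X}
    (hbot : L (y, q) ≠ ⊥) : ((q y : ℝ) : EReal) ≤ L (y, q) := by
  have h := le_lagConj L q y y q
  rw [hL] at h
  induction hL : L (y, q) with
  | bot => exact absurd hL hbot
  | coe t =>
    rw [hL] at h
    have : q y + q y - t ≤ t := by exact_mod_cast h
    exact_mod_cast (by linarith : q y ≤ t)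
  | top => exact le_top

theorem IsSelfdual.monotone (hL : IsSelfdual L) {x y : X} {p q : StrongDual ℝ X}
    (hx : L (x, p) = ((p x : ℝ) : EReal)) (hy : L (y, q) = ((q y : ℝ) : EReal)) :
    0 ≤ (p - q) (x - y) := by
  have h := le_lagConj L p x y q
  rw [hL, hx, hy] at h
  have : p y + q x - q y ≤ p x := by exact_mod_cast h
  simp only [sub_apply, map_sub]
  linarith

theorem IsSelfdual.exists_eq_pairing_and_half_sq_le
    (hrefl : Function.Surjective (inclusionInDoubleDual ℝ X)) (hL : IsSelfdual L)
    (hbot : ∀ e, L e ≠ ⊥) (hfin : ∃ e, L e ≠ ⊤)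
    (hconv : Convex ℝ {et : (X × StrongDual ℝ X) × ℝ | L et.1 ≤ et.2})
    (x : X) (p : StrongDual ℝ X) :
    ∃ z R, L (z, R) = ((R z : ℝ) : EReal) ∧
      ‖z - x‖ ^ 2 / 2 + ‖R - p‖ ^ 2 / 2 ≤ (p - R) (z - x) := by
  -- `⟨q, y⟩ - g (y, q) = ⟨q - p, y - x⟩ + ½‖y - x‖² + ½‖q - p‖² ≥ 0`
  set g : X × StrongDual ℝ X → ℝ := fun e =>
    p e.1 + e.2 x - p x - (‖e.1 - x‖ ^ 2 + ‖e.2 - p‖ ^ 2) / 2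
  have hgL : ∀ e, (g e : EReal) ≤ L e := fun ⟨y, q⟩ => by
    refine le_trans ?_ (hL.apply_le (hbot _))
    have := abs_le.1 (abs_apply_le_half_sq_add_half_sq (q - p) (y - x))
    simp only [g, sub_apply, map_sub] at this ⊢
    exact_mod_cast (by linarith : _)
  obtain ⟨φ, c, hLφ, hφg⟩ := exists_affine_between_of_concave_le_convex hconv hfin
    (concaveOn_affine_sub_half_sq_norm_sub x p) (by fun_prop) hgL
  set R : StrongDual ℝ X := φ.comp (.inl ℝ X _)
  obtain ⟨z, hz⟩ := hrefl (φ.comp (.inr ℝ X _))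
  have hφ : ∀ y q, φ (y, q) = R y + q z := fun y q => by
    rw [← φ.comp_inl_add_comp_inr, ← hz]
    rfl
  have hupper : L (z, R) ≤ (-c : ℝ) := by
    rw [← hL]
    exact lagConj_le hbot fun y q t ht => by linarith [hLφ (y, q) t ht, hφ y q]
  have hlower : R z ≤ -c := by exact_mod_cast (hL.apply_le (hbot _)).trans hupper
  have hnorm : ‖z - x‖ ^ 2 / 2 + ‖R - p‖ ^ 2 / 2 ≤ c + R x + p z - p x := by
    have := half_sq_opNorm_add_half_sq_opNorm_le (p - R) (inclusionInDoubleDual ℝ X (x - z))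
      (M := c + R x + p z - p x) fun y q => by
        have := hφg (x + y, p + q)
        simp only [hφ, dual_def, map_add, add_apply, add_sub_cancel_left, sub_apply, map_sub]
          at this ⊢
        linarith
    have hzx : ‖inclusionInDoubleDual ℝ X (x - z)‖ = ‖x - z‖ :=
      (inclusionInDoubleDualLi ℝ).norm_map _
    rw [hzx, norm_sub_rev x, norm_sub_rev p] at this
    linarith
  have hpair := abs_le.1 (abs_apply_le_half_sq_add_half_sq (p - R) (z - x))
  rw [norm_sub_rev p] at hpair
  simp only [sub_apply, map_sub] at hpair ⊢
  refine ⟨z, R, le_antisymm (hupper.trans ?_) (hL.apply_le (hbot _)), by linarith⟩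
  exact_mod_cast (by linarith : -c ≤ R z)

end Selfdual

theorem stmt6_general {X : Type*} [NormedAddCommGroup X] [NormedSpace ℝ X]
    (hrefl : Function.Surjective (NormedSpace.inclusionInDoubleDual ℝ X))
    (L : X × StrongDual ℝ X → EReal)
    (hproper : (∃ z, L z ≠ ⊤) ∧ ∀ z, L z ≠ ⊥)
    (hconv : ∀ a b : X × StrongDual ℝ X, ∀ t : ℝ, 0 ≤ t → t ≤ 1 →
      L (t • a + (1 - t) • b) ≤ (t : EReal) * L a + ((1 - t : ℝ) : EReal) * L b)
    (hself : ∀ x p, LagConj L p x = L (x, p)) :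
    (∀ x y : X, ∀ p q : StrongDual ℝ X,
        L (x, p) = ((p x : ℝ) : EReal) → L (y, q) = ((q y : ℝ) : EReal) →
        0 ≤ (p - q) (x - y)) ∧
    (∀ x : X, ∀ p : StrongDual ℝ X,
        (∀ y : X, ∀ q : StrongDual ℝ X, L (y, q) = ((q y : ℝ) : EReal) → 0 ≤ (p - q) (x - y)) →
        L (x, p) = ((p x : ℝ) : EReal)) := by
  refine ⟨fun x y p q hx hy => IsSelfdual.monotone hself hx hy, fun x p hmon => ?_⟩
  obtain ⟨z, R, hzR, hnear⟩ := IsSelfdual.exists_eq_pairing_and_half_sq_le hrefl hself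
    hproper.2 hproper.1 (convex_epigraph_of_map_combo_le hconv) x p
  have hmono : 0 ≤ (p - R) (x - z) := hmon z R hzR
  rw [← neg_sub z x, map_neg] at hmono
  have hz : ‖z - x‖ = 0 := by nlinarith [norm_nonneg (z - x), norm_nonneg (R - p)]
  have hR : ‖R - p‖ = 0 := by nlinarith [norm_nonneg (z - x), norm_nonneg (R - p)]
  rw [norm_eq_zero, sub_eq_zero] at hz hR
  rwa [hz, hR] at hzR

/-- If `L` is a proper selfdual Lagrangian on a reflexive Banach
space, then `x ↦ ∂̄L(x) = {p : L(x,p) = ⟨x,p⟩}` is maximal monotone: its graph is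
monotone and any monotonically related pair belongs to it. -/
theorem stmt6 {X : Type*} [NormedAddCommGroup X] [NormedSpace ℝ X] [CompleteSpace X]
    (hrefl : Function.Surjective (NormedSpace.inclusionInDoubleDual ℝ X))
    (L : X × StrongDual ℝ X → EReal)
    (hproper : (∃ z, L z ≠ ⊤) ∧ ∀ z, L z ≠ ⊥)
    (hconv : ∀ a b : X × StrongDual ℝ X, ∀ t : ℝ, 0 ≤ t → t ≤ 1 →
      L (t • a + (1 - t) • b) ≤ (t : EReal) * L a + ((1 - t : ℝ) : EReal) * L b)
    (hlsc : LowerSemicontinuous L)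
    (hself : ∀ x p, LagConj L p x = L (x, p)) :
    (∀ x y : X, ∀ p q : StrongDual ℝ X,
        L (x, p) = ((p x : ℝ) : EReal) → L (y, q) = ((q y : ℝ) : EReal) →
        0 ≤ (p - q) (x - y)) ∧
    (∀ x : X, ∀ p : StrongDual ℝ X,
        (∀ y : X, ∀ q : StrongDual ℝ X, L (y, q) = ((q y : ℝ) : EReal) → 0 ≤ (p - q) (x - y)) →
        L (x, p) = ((p x : ℝ) : EReal)) :=
  stmt6_general hrefl L hproper hconv hself
end

section
/- Let T : D(T) ⊂ X → 2^{X*} be a monotone operator with nonempty domain, and define the Fitzpatrick function L_T(x,p) = sup{⟨p,y⟩ + ⟨q, x − y⟩ : (y,q) ∈ G(T)}. Then L_T is convex and lower semicontinuous on X × X*, and for every x ∈ D(T), Tx ⊂ ∂̄L_T(x) ∩ δL_T(x). -/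
/-!
`L_T` is a pointwise supremum of continuous affine functions of `(x, p)`, hence convex and
lower semicontinuous. For `p ∈ T x`, monotonicity says precisely that every term
`⟨p, y⟩ + ⟨q, x - y⟩` is at most `⟨p, x⟩`, the value of the term indexed by `(x, p)` itself;
the same term evaluated at `(y, q)` gives the subgradient inequality.
-/

open NormedSpace

/-- The Fitzpatrick function `L_T(x,p) = sup{⟨p,y⟩ + ⟨q, x − y⟩ : (y,q) ∈ G(T)}`. -/
noncomputable def Fitz {X : Type*} [NormedAddCommGroup X] [NormedSpace ℝ X]
    (T : X → Set (StrongDual ℝ X)) (z : X × StrongDual ℝ X) : EReal :=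
  ⨆ yq : {yq : X × StrongDual ℝ X // yq.2 ∈ T yq.1},
    ((z.2 yq.1.1 + yq.1.2 (z.1 - yq.1.1) : ℝ) : EReal)

theorem iSup_coe_convexComb_le {E ι : Type*} [AddCommGroup E] [Module ℝ E]
    (g : ι → E → ℝ) {a b : E} {t : ℝ} (ht : 0 ≤ t) (ht1 : t ≤ 1)
    (hg : ∀ i, g i (t • a + (1 - t) • b) = t * g i a + (1 - t) * g i b) :
    ⨆ i, (g i (t • a + (1 - t) • b) : EReal) ≤
      (t : EReal) * (⨆ i, (g i a : EReal)) + ((1 - t : ℝ) : EReal) * ⨆ i, (g i b : EReal) := by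
  refine iSup_le fun i => ?_
  rw [hg, EReal.coe_add, EReal.coe_mul, EReal.coe_mul]
  have h1t : (0 : EReal) ≤ ((1 - t : ℝ) : EReal) := EReal.coe_nonneg.2 (by linarith)
  gcongr
  · exact le_iSup (fun j => (g j a : EReal)) i
  · exact le_iSup (fun j => (g j b : EReal)) i

section Fitzpatrick

variable {X : Type*} [NormedAddCommGroup X] [NormedSpace ℝ X] (T : X → Set (StrongDual ℝ X))

theorem coe_le_fitz {y : X} {q : StrongDual ℝ X} (hq : q ∈ T y) (z : X × StrongDual ℝ X) :
    ((z.2 y + q (z.1 - y) : ℝ) : EReal) ≤ Fitz T z :=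
  le_iSup (fun j : {yq : X × StrongDual ℝ X // yq.2 ∈ T yq.1} =>
    ((z.2 j.1.1 + j.1.2 (z.1 - j.1.1) : ℝ) : EReal)) ⟨(y, q), hq⟩

theorem fitz_convexComb_le (a b : X × StrongDual ℝ X) {t : ℝ} (ht : 0 ≤ t) (ht1 : t ≤ 1) :
    Fitz T (t • a + (1 - t) • b) ≤ (t : EReal) * Fitz T a + ((1 - t : ℝ) : EReal) * Fitz T b :=
  iSup_coe_convexComb_le (fun (yq : {yq : X × StrongDual ℝ X // yq.2 ∈ T yq.1})
      (z : X × StrongDual ℝ X) => z.2 yq.1.1 + yq.1.2 (z.1 - yq.1.1)) ht ht1 fun _ => by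
    simp only [Prod.fst_add, Prod.snd_add, Prod.smul_fst, Prod.smul_snd, add_apply, smul_apply,
      smul_eq_mul, map_sub, map_add, map_smul]
    ring

theorem lowerSemicontinuous_fitz : LowerSemicontinuous (Fitz T) :=
  lowerSemicontinuous_iSup fun yq => Continuous.lowerSemicontinuous <|
    continuous_coe_real_ereal.comp <|
      ((ContinuousLinearMap.apply ℝ ℝ yq.1.1).continuous.comp continuous_snd).add
        (yq.1.2.continuous.comp (continuous_fst.sub continuous_const))

variable {T}

theorem fitz_eq_of_mem
    (hmono : ∀ x y : X, ∀ p q : StrongDual ℝ X, p ∈ T x → q ∈ T y → 0 ≤ (p - q) (x - y))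
    {x : X} {p : StrongDual ℝ X} (hp : p ∈ T x) : Fitz T (x, p) = ((p x : ℝ) : EReal) := by
  refine le_antisymm (iSup_le fun ⟨(y, q), hq⟩ => EReal.coe_le_coe_iff.2 ?_) ?_
  · have := hmono x y p q hp hq
    simp only [sub_apply, map_sub] at this ⊢
    linarith
  · simpa using coe_le_fitz T hp (x, p)

theorem fitz_add_le_of_mem
    (hmono : ∀ x y : X, ∀ p q : StrongDual ℝ X, p ∈ T x → q ∈ T y → 0 ≤ (p - q) (x - y))
    {x : X} {p : StrongDual ℝ X} (hp : p ∈ T x) (y : X) (q : StrongDual ℝ X) :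
    Fitz T (x, p) + ((p (y - x) + (q - p) x : ℝ) : EReal) ≤ Fitz T (y, q) := by
  refine le_trans ?_ (coe_le_fitz T hp (y, q))
  rw [fitz_eq_of_mem hmono hp, ← EReal.coe_add, EReal.coe_le_coe_iff]
  simp only [sub_apply, map_sub]
  linarith

end Fitzpatrick

theorem stmt7_general {X : Type*} [NormedAddCommGroup X] [NormedSpace ℝ X]
    (T : X → Set (StrongDual ℝ X))
    (hmono : ∀ x y : X, ∀ p q : StrongDual ℝ X, p ∈ T x → q ∈ T y → 0 ≤ (p - q) (x - y)) :
    (∀ a b : X × StrongDual ℝ X, ∀ t : ℝ, 0 ≤ t → t ≤ 1 →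
      Fitz T (t • a + (1 - t) • b) ≤ (t : EReal) * Fitz T a + ((1 - t : ℝ) : EReal) * Fitz T b) ∧
    LowerSemicontinuous (Fitz T) ∧
    (∀ x : X, ∀ p ∈ T x,
      Fitz T (x, p) = ((p x : ℝ) : EReal) ∧
      (∀ y q, Fitz T (x, p) + ((p (y - x) + (q - p) x : ℝ) : EReal) ≤ Fitz T (y, q))) :=
  ⟨fun a b _ ht ht1 => fitz_convexComb_le T a b ht ht1, lowerSemicontinuous_fitz T,
    fun _ _ hp => ⟨fitz_eq_of_mem hmono hp, fitz_add_le_of_mem hmono hp⟩⟩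

/-- For a monotone operator `T` with nonempty domain, the
Fitzpatrick function `L_T` is convex and lower semicontinuous on `X × X*`, and
for every `x ∈ D(T)`, `Tx ⊆ ∂̄L_T(x) ∩ δL_T(x)`. -/
theorem stmt7 {X : Type*} [NormedAddCommGroup X] [NormedSpace ℝ X] [CompleteSpace X]
    (hrefl : Function.Surjective (NormedSpace.inclusionInDoubleDual ℝ X))
    (T : X → Set (StrongDual ℝ X))
    (hmono : ∀ x y : X, ∀ p q : StrongDual ℝ X, p ∈ T x → q ∈ T y → 0 ≤ (p - q) (x - y))
    (hdom : ∃ x, (T x).Nonempty) :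
    (∀ a b : X × StrongDual ℝ X, ∀ t : ℝ, 0 ≤ t → t ≤ 1 →
      Fitz T (t • a + (1 - t) • b) ≤ (t : EReal) * Fitz T a + ((1 - t : ℝ) : EReal) * Fitz T b) ∧
    LowerSemicontinuous (Fitz T) ∧
    (∀ x : X, ∀ p ∈ T x,
      Fitz T (x, p) = ((p x : ℝ) : EReal) ∧
      (∀ y q, Fitz T (x, p) + ((p (y - x) + (q - p) x : ℝ) : EReal) ≤ Fitz T (y, q))) :=
  stmt7_general T hmono
end

section
/- If T is a maximal monotone operator with nonempty domain on a reflexive Banach space X, then Tx = ∂̄L_T(x) = δL_T(x) for every x, where L_T is the Fitzpatrick function of T. -/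
open NormedSpace

/-!
For `(y, q)` in the graph of `T`, `p y + q (x - y) ≤ p x` says exactly `0 ≤ (p - q) (x - y)`.
Hence `L_T(x, p) ≤ ⟨x, p⟩` means that `(x, p)` is monotonically related to the graph, which
maximality turns into `p ∈ T x`; monotonicity gives the converse.  Since `(x, p)` itself enters
the supremum once `p ∈ T x`, this also forces `⟨x, p⟩ ≤ L_T(x, p)` everywhere.  The subgradient inequality at
`(x, p)` is tested against points `(y, q)` of the graph, where `L_T(y, q) = ⟨y, q⟩`.
-/

namespace Fitz

variable {X : Type*} [NormedAddCommGroup X] [NormedSpace ℝ X] (T : X → Set (StrongDual ℝ X))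

def MonotonicallyRelated (x : X) (p : StrongDual ℝ X) : Prop :=
  ∀ y q, q ∈ T y → 0 ≤ (p - q) (x - y)

lemma le_of_mem {x y : X} (p : StrongDual ℝ X) {q : StrongDual ℝ X} (hq : q ∈ T y) :
    ((p y + q (x - y) : ℝ) : EReal) ≤ Fitz T (x, p) :=
  le_iSup (fun yq : {yq : X × StrongDual ℝ X // yq.2 ∈ T yq.1} =>
    ((p yq.1.1 + yq.1.2 (x - yq.1.1) : ℝ) : EReal)) ⟨(y, q), hq⟩

lemma le_apply_iff_monotonicallyRelated (x : X) (p : StrongDual ℝ X) :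
    Fitz T (x, p) ≤ ((p x : ℝ) : EReal) ↔ MonotonicallyRelated T x p := by
  simp only [Fitz, iSup_le_iff, Subtype.forall, Prod.forall, EReal.coe_le_coe_iff,
    MonotonicallyRelated, sub_apply, map_sub]
  refine forall₂_congr fun y q => imp_congr_right fun _ => ?_
  constructor <;> intro h <;> linarith

lemma apply_le (hmax : ∀ x p, MonotonicallyRelated T x p → p ∈ T x)
    (x : X) (p : StrongDual ℝ X) : ((p x : ℝ) : EReal) ≤ Fitz T (x, p) := by
  by_contra! hlt
  have hp := hmax x p ((le_apply_iff_monotonicallyRelated T x p).1 hlt.le)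
  simpa using (le_of_mem T p hp).trans_lt hlt

lemma eq_apply_of_mem (hmono : ∀ x p, p ∈ T x → MonotonicallyRelated T x p)
    {x : X} {p : StrongDual ℝ X} (hp : p ∈ T x) : Fitz T (x, p) = ((p x : ℝ) : EReal) :=
  le_antisymm ((le_apply_iff_monotonicallyRelated T x p).2 (hmono x p hp))
    (by simpa using le_of_mem T p hp)

end Fitz

open Fitz in
theorem stmt10_general {X : Type*} [NormedAddCommGroup X] [NormedSpace ℝ X]
    (T : X → Set (StrongDual ℝ X))
    (hmono : ∀ x y : X, ∀ p q : StrongDual ℝ X, p ∈ T x → q ∈ T y → 0 ≤ (p - q) (x - y))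
    (hmax : ∀ x : X, ∀ p : StrongDual ℝ X,
      (∀ y : X, ∀ q : StrongDual ℝ X, q ∈ T y → 0 ≤ (p - q) (x - y)) → p ∈ T x) :
    ∀ x : X, ∀ p : StrongDual ℝ X,
      (p ∈ T x ↔ Fitz T (x, p) = ((p x : ℝ) : EReal)) ∧
      (p ∈ T x ↔
        ∀ y q, Fitz T (x, p) + ((p (y - x) + (q - p) x : ℝ) : EReal) ≤ Fitz T (y, q)) := by
  have hrel : ∀ x p, p ∈ T x → MonotonicallyRelated T x p := fun x p hp y q hq =>
    hmono x y p q hp hq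
  intro x p
  refine ⟨⟨eq_apply_of_mem T hrel, fun h => hmax x p ?_⟩, ⟨fun hp y q => ?_, fun h => ?_⟩⟩
  · exact (le_apply_iff_monotonicallyRelated T x p).1 h.le
  · have key : p x + (p (y - x) + (q - p) x) = q x + p (y - x) := by
      simp only [sub_apply, map_sub]; ring
    rw [eq_apply_of_mem T hrel hp, ← EReal.coe_add, key]
    exact le_of_mem T q hp
  · refine hmax x p fun y q hq => ?_
    have hsub : ((p x + (p (y - x) + (q - p) x) : ℝ) : EReal) ≤ ((q y : ℝ) : EReal) := by
      rw [EReal.coe_add, ← eq_apply_of_mem T hrel hq]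
      exact (add_le_add_left (apply_le T hmax x p) _).trans (h y q)
    have hsub := EReal.coe_le_coe_iff.1 hsub
    simp only [sub_apply, map_sub] at hsub ⊢
    linarith

/-- If `T` is maximal monotone with nonempty domain, then
`Tx = ∂̄L_T(x) = δL_T(x)` for every `x`, where `L_T` is the Fitzpatrick function. -/
theorem stmt10 {X : Type*} [NormedAddCommGroup X] [NormedSpace ℝ X] [CompleteSpace X]
    (hrefl : Function.Surjective (NormedSpace.inclusionInDoubleDual ℝ X))
    (T : X → Set (StrongDual ℝ X))
    (hmono : ∀ x y : X, ∀ p q : StrongDual ℝ X, p ∈ T x → q ∈ T y → 0 ≤ (p - q) (x - y))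
    (hmax : ∀ x : X, ∀ p : StrongDual ℝ X,
      (∀ y : X, ∀ q : StrongDual ℝ X, q ∈ T y → 0 ≤ (p - q) (x - y)) → p ∈ T x)
    (hdom : ∃ x, (T x).Nonempty) :
    ∀ x : X, ∀ p : StrongDual ℝ X,
      (p ∈ T x ↔ Fitz T (x, p) = ((p x : ℝ) : EReal)) ∧
      (p ∈ T x ↔
        ∀ y q, Fitz T (x, p) + ((p (y - x) + (q - p) x : ℝ) : EReal) ≤ Fitz T (y, q)) :=
  stmt10_general T hmono hmax
end

section
/- Let f₁, f₂ : E → ℝ ∪ {+∞} be proper convex lsc functions on a reflexive Banach space E, and define the proximal average h(X) = inf{ ½f₁(X₁) + ½f₂(X₂) + (1/8)‖X₁ − X₂‖² : X = ½(X₁ + X₂) }. Then the Legendre dual of h is h*(P) = inf{ ½f₁*(P₁) + ½f₂*(P₂) + (1/8)‖P₁ − P₂‖² : P = ½(P₁ + P₂), P₁,P₂ ∈ E* }. -/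
open NormedSpace

/-- Fenchel–Legendre conjugate of an extended-real-valued function. -/
noncomputable def FnConjE {E : Type*} [NormedAddCommGroup E] [NormedSpace ℝ E]
    (f : E → EReal) (P : StrongDual ℝ E) : EReal :=
  ⨆ x : E, ((P x : ℝ) : EReal) - f x

/-- The proximal average of two functions. -/
noncomputable def ProxAvg {E : Type*} [NormedAddCommGroup E] [NormedSpace ℝ E]
    (f₁ f₂ : E → EReal) (x : E) : EReal :=
  ⨅ pr : {pr : E × E // x = (2⁻¹ : ℝ) • (pr.1 + pr.2)},
    ((2⁻¹ : ℝ) : EReal) * f₁ pr.1.1 + ((2⁻¹ : ℝ) : EReal) * f₂ pr.1.2 +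
      (((8⁻¹ : ℝ) * ‖pr.1.1 - pr.1.2‖ ^ 2 : ℝ) : EReal)

/-!
Write `h = ProxAvg f₁ f₂`. The inequality `h* ≤ ProxAvg f₁* f₂*` holds term by term: for
`P = ½(P₁ + P₂)` and `x = ½(x₁ + x₂)` one has `P x = ½ P₁ x₁ + ½ P₂ x₂ - ¼ (P₁ - P₂)(x₁ - x₂)`,
and the cross term is at most `⅛‖x₁ - x₂‖² + ⅛‖P₁ - P₂‖²`.

For the converse let `a = h*(P)` and perturb the infimum that computes `-a`:
`g y = inf {½ r₁ + ½ r₂ + ⅛‖x₁ - x₂ + y‖² - P (½(x₁ + x₂)) : f₁ x₁ ≤ r₁, f₂ x₂ ≤ r₂}`.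
Then `g` is convex, `g 0 ≥ -a`, and its strict epigraph is open since the norm is continuous, so
Hahn–Banach separates `(0, -a)` from it and yields `Q` with `Q y - a ≤ g y`. Substituting
`y = z - x₁ + x₂` and using `sup_z (Q z - ⅛‖z‖²) = 2‖Q‖²` shows that `P₁ = P - 2Q`, `P₂ = P + 2Q`
satisfy `½ f₁*(P₁) + ½ f₂*(P₂) + ⅛‖P₁ - P₂‖² ≤ a`.
-/

lemma EReal.coe_sub_le_comm {a : ℝ} {b c : EReal} :
    (a : EReal) - b ≤ c ↔ (a : EReal) - c ≤ b := by
  induction b <;> induction c <;> simp [EReal.sub_top, ← EReal.coe_sub, add_comm]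

def realEpigraph {α : Type*} (f : α → EReal) : Set (α × ℝ) := {p | f p.1 ≤ p.2}

lemma realEpigraph_nonempty {α : Type*} {f : α → EReal} (h : ∃ x, f x ≠ ⊤) :
    (realEpigraph f).Nonempty :=
  let ⟨x, hx⟩ := h
  ⟨(x, (f x).toReal), EReal.le_coe_toReal hx⟩

lemma convex_realEpigraph {E : Type*} [AddCommGroup E] [Module ℝ E] {f : E → EReal}
    (hf : ∀ a b : E, ∀ t : ℝ, 0 ≤ t → t ≤ 1 →
      f (t • a + (1 - t) • b) ≤ (t : EReal) * f a + ((1 - t : ℝ) : EReal) * f b) :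
    Convex ℝ (realEpigraph f) := by
  rintro ⟨x, r⟩ hx ⟨x', r'⟩ hx' s t hs ht hst
  obtain rfl : t = 1 - s := by linarith
  show f (s • x + (1 - s) • x') ≤ ((s * r + (1 - s) * r' : ℝ) : EReal)
  calc f (s • x + (1 - s) • x') ≤ (s : EReal) * f x + ((1 - s : ℝ) : EReal) * f x' :=
        hf x x' s hs (by linarith)
    _ ≤ (s : EReal) * r + ((1 - s : ℝ) : EReal) * r' := by
        gcongr
        exacts [hx, hx']
    _ = ((s * r + (1 - s) * r' : ℝ) : EReal) := by norm_cast

section Conjugate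

variable {E : Type*} [NormedAddCommGroup E] [NormedSpace ℝ E]

lemma exists_lt_of_coe_lt_fnConjE {f : E → EReal} {P : StrongDual ℝ E} {c : ℝ}
    (h : (c : EReal) < FnConjE f P) : ∃ x, ∃ r : ℝ, f x ≤ r ∧ c < P x - r := by
  obtain ⟨x, hx⟩ := lt_iSup_iff.mp h
  have hfx : f x < ((P x - c : ℝ) : EReal) := by
    generalize f x = e at hx ⊢
    induction e with
    | bot => exact EReal.bot_lt_coe _
    | top => simp [EReal.sub_top] at hx
    | coe e =>
      norm_cast at hx ⊢
      linarith
  obtain ⟨r, hxr, hrc⟩ := EReal.lt_iff_exists_real_btwn.mp hfx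
  exact ⟨x, r, hxr.le, by linarith [EReal.coe_lt_coe_iff.mp hrc]⟩

lemma fnConjE_add_fnConjE_le {f₁ f₂ : E → EReal} {P₁ P₂ : StrongDual ℝ E} {b : ℝ}
    (h : ∀ x₁ x₂ (r₁ r₂ : ℝ), f₁ x₁ ≤ r₁ → f₂ x₂ ≤ r₂ → P₁ x₁ - r₁ + (P₂ x₂ - r₂) ≤ b) :
    FnConjE f₁ P₁ + FnConjE f₂ P₂ ≤ b := by
  refine EReal.add_le_of_forall_lt fun u hu v hv => ?_
  induction u with
  | bot => simp
  | top => exact absurd hu not_top_lt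
  | coe u =>
    induction v with
    | bot => simp
    | top => exact absurd hv not_top_lt
    | coe v =>
      obtain ⟨x₁, r₁, hr₁, hu⟩ := exists_lt_of_coe_lt_fnConjE hu
      obtain ⟨x₂, r₂, hr₂, hv⟩ := exists_lt_of_coe_lt_fnConjE hv
      exact_mod_cast (add_lt_add hu hv).le.trans (h x₁ x₂ r₁ r₂ hr₁ hr₂)

end Conjugate

section Separation

lemma isOpen_setOf_exists_lt {Z E : Type*} [TopologicalSpace E] {K : Set Z} {Φ : Z → E → ℝ}
    (hΦ : ∀ z, Continuous (Φ z)) : IsOpen {q : E × ℝ | ∃ z ∈ K, Φ z q.1 < q.2} := by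
  have : {q : E × ℝ | ∃ z ∈ K, Φ z q.1 < q.2} = ⋃ z ∈ K, {q | Φ z q.1 < q.2} := by
    ext
    simp
  rw [this]
  exact isOpen_biUnion fun z _ => isOpen_lt ((hΦ z).comp continuous_fst) continuous_snd

lemma convex_setOf_exists_lt {Z E : Type*} [AddCommGroup Z] [Module ℝ Z] [AddCommGroup E]
    [Module ℝ E] {K : Set Z} (hK : Convex ℝ K) {Φ : Z → E → ℝ}
    (hΦ : ConvexOn ℝ (K ×ˢ Set.univ) (Function.uncurry Φ)) :
    Convex ℝ {q : E × ℝ | ∃ z ∈ K, Φ z q.1 < q.2} := by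
  rintro ⟨y, t⟩ ⟨z, hz, h⟩ ⟨y', t'⟩ ⟨z', hz', h'⟩ a b ha hb hab
  refine ⟨a • z + b • z', hK hz hz' ha hb hab, ?_⟩
  have hΦ_comb := hΦ.2 (x := (z, y)) (y := (z', y')) ⟨hz, trivial⟩ ⟨hz', trivial⟩ ha hb hab
  have hgap_comb := convex_Ioi (0 : ℝ) (sub_pos.2 h) (sub_pos.2 h') ha hb hab
  simp only [Prod.smul_mk, Prod.mk_add_mk, Function.uncurry_apply_pair, smul_eq_mul,
    Set.mem_Ioi] at hΦ_comb hgap_comb ⊢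
  linarith

variable {E : Type*} [TopologicalSpace E] [AddCommGroup E] [Module ℝ E] [IsTopologicalAddGroup E]
  [ContinuousSMul ℝ E]

/-- The point `(0, t)` of `C` above `(0, c)` makes the separating hyperplane non-vertical. -/
theorem exists_dual_add_lt_of_isOpen_of_convex {C : Set (E × ℝ)} (hopen : IsOpen C)
    (hconv : Convex ℝ C) {c t : ℝ} (hct : c < t) (ht : ((0 : E), t) ∈ C)
    (hc : ((0 : E), c) ∉ C) : ∃ Q : StrongDual ℝ E, ∀ q ∈ C, Q q.1 + c < q.2 := by
  obtain ⟨φ, hφ⟩ := geometric_hahn_banach_open_point hconv hopen hc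
  set L := φ.comp (ContinuousLinearMap.inl ℝ E ℝ)
  set μ := φ ((0 : E), (1 : ℝ))
  have hφ_apply : ∀ y s, φ (y, s) = L y + s * μ := by
    intro y s
    rw [show ((y, s) : E × ℝ) = (y, 0) + s • ((0 : E), (1 : ℝ)) by simp, map_add, map_smul,
      smul_eq_mul]
    rfl
  have hμ : μ < 0 := by
    have := hφ _ ht
    rw [hφ_apply, hφ_apply, map_zero] at this
    nlinarith
  refine ⟨(-μ)⁻¹ • L, fun ⟨y, s⟩ hq => ?_⟩
  have hsep := hφ _ hq
  rw [hφ_apply, hφ_apply, map_zero] at hsep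
  have : (-μ)⁻¹ * L y < s - c := by
    rw [inv_mul_lt_iff₀ (neg_pos.2 hμ)]
    linarith
  simpa using (by linarith : (-μ)⁻¹ * L y + c < s)

end Separation

section QuadraticCoupling

variable {E : Type*} [NormedAddCommGroup E] [NormedSpace ℝ E]

lemma half_smul_add_apply_half_smul_add_le (P₁ P₂ : StrongDual ℝ E) (x₁ x₂ : E) :
    ((2⁻¹ : ℝ) • (P₁ + P₂)) ((2⁻¹ : ℝ) • (x₁ + x₂)) ≤
      2⁻¹ * P₁ x₁ + 2⁻¹ * P₂ x₂ + 8⁻¹ * ‖x₁ - x₂‖ ^ 2 + 8⁻¹ * ‖P₁ - P₂‖ ^ 2 := by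
  have hcross : -((P₁ - P₂) (x₁ - x₂)) ≤ ‖P₁ - P₂‖ * ‖x₁ - x₂‖ :=
    (neg_le_abs _).trans ((P₁ - P₂).le_opNorm (x₁ - x₂))
  simp only [smul_apply, add_apply, sub_apply, map_smul, map_add, map_sub, smul_eq_mul]
    at hcross ⊢
  nlinarith [sq_nonneg (‖P₁ - P₂‖ - ‖x₁ - x₂‖)]

lemma exists_apply_sub_sq_norm_gt (Q : StrongDual ℝ E) {ε : ℝ} (hε : 0 < ε) :
    ∃ z : E, 2 * ‖Q‖ ^ 2 - ε < Q z - 8⁻¹ * ‖z‖ ^ 2 := by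
  rcases eq_or_ne Q 0 with rfl | hQ
  · exact ⟨0, by simpa⟩
  have hQpos : 0 < ‖Q‖ := norm_pos_iff.mpr hQ
  obtain ⟨x, hx, hQx⟩ : ∃ x : E, ‖x‖ < 1 ∧ ‖Q‖ - ε / (4 * ‖Q‖) < Q x := by
    obtain ⟨x, hx, hQx⟩ := Q.exists_lt_apply_of_lt_opNorm
      (sub_lt_self ‖Q‖ (by positivity : 0 < ε / (4 * ‖Q‖)))
    rcases abs_cases (Q x) with ⟨habs, -⟩ | ⟨habs, -⟩
    · exact ⟨x, hx, by rwa [Real.norm_eq_abs, habs] at hQx⟩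
    · exact ⟨-x, by rwa [norm_neg], by rwa [Real.norm_eq_abs, habs, ← map_neg] at hQx⟩
  refine ⟨(4 * ‖Q‖) • x, ?_⟩
  have hQx' : 4 * ‖Q‖ ^ 2 - ε < 4 * ‖Q‖ * Q x := by
    have := mul_lt_mul_of_pos_left hQx (by positivity : 0 < 4 * ‖Q‖)
    rw [mul_sub, mul_div_cancel₀ _ (by positivity)] at this
    linarith
  have hx' : ‖x‖ ^ 2 ≤ 1 := pow_le_one₀ (norm_nonneg x) hx.le
  rw [map_smul, smul_eq_mul, norm_smul, Real.norm_of_nonneg (by positivity)]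
  nlinarith

end QuadraticCoupling

section ProxObjective

variable {E : Type*} [NormedAddCommGroup E] [NormedSpace ℝ E] {f₁ f₂ : E → EReal}

/-- Its infimum over `((x₁, r₁), (x₂, r₂)) ∈ realEpigraph f₁ ×ˢ realEpigraph f₂` is the
perturbation `g y` of `-(ProxAvg f₁ f₂)*(P)`, the latter being the value at `y = 0`. -/
noncomputable def proxObjective (P : StrongDual ℝ E) (z : (E × ℝ) × (E × ℝ)) (y : E) : ℝ :=
  2⁻¹ * z.1.2 + 2⁻¹ * z.2.2 + 8⁻¹ * ‖z.1.1 - z.2.1 + y‖ ^ 2 - P ((2⁻¹ : ℝ) • (z.1.1 + z.2.1))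

lemma continuous_proxObjective (P : StrongDual ℝ E) (z : (E × ℝ) × (E × ℝ)) :
    Continuous (proxObjective P z) := by
  unfold proxObjective
  fun_prop

lemma convexOn_proxObjective (P : StrongDual ℝ E) :
    ConvexOn ℝ Set.univ (Function.uncurry (proxObjective P)) := by
  refine ⟨convex_univ, ?_⟩
  rintro ⟨⟨⟨x₁, r₁⟩, x₂, r₂⟩, y⟩ - ⟨⟨⟨x₁', r₁'⟩, x₂', r₂'⟩, y'⟩ - a b ha hb hab
  have hsq := (convexOn_univ_norm.pow (fun _ _ => norm_nonneg _) 2).2 (Set.mem_univ (x₁ - x₂ + y))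
    (Set.mem_univ (x₁' - x₂' + y')) ha hb hab
  have hlin : a • x₁ + b • x₁' - (a • x₂ + b • x₂') + (a • y + b • y') =
      a • (x₁ - x₂ + y) + b • (x₁' - x₂' + y') := by module
  simp only [proxObjective, Function.uncurry_apply_pair, Prod.smul_mk, Prod.mk_add_mk, smul_eq_mul,
    Pi.pow_apply, hlin, map_add, map_smul] at hsq ⊢
  linarith

lemma proxAvg_half_smul_add_le {x₁ x₂ : E} {r₁ r₂ : ℝ} (h₁ : f₁ x₁ ≤ r₁) (h₂ : f₂ x₂ ≤ r₂) :
    ProxAvg f₁ f₂ ((2⁻¹ : ℝ) • (x₁ + x₂)) ≤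
      ((2⁻¹ * r₁ + 2⁻¹ * r₂ + 8⁻¹ * ‖x₁ - x₂‖ ^ 2 : ℝ) : EReal) := by
  refine (iInf_le _ ⟨(x₁, x₂), rfl⟩).trans ?_
  push_cast
  gcongr

lemma neg_proxObjective_le_fnConjE_proxAvg (P : StrongDual ℝ E) {z : (E × ℝ) × (E × ℝ)}
    (hz : z ∈ realEpigraph f₁ ×ˢ realEpigraph f₂) :
    ((-proxObjective P z 0 : ℝ) : EReal) ≤ FnConjE (ProxAvg f₁ f₂) P := by
  obtain ⟨⟨x₁, r₁⟩, x₂, r₂⟩ := z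
  refine le_iSup_of_le ((2⁻¹ : ℝ) • (x₁ + x₂)) ?_
  calc ((-proxObjective P ((x₁, r₁), x₂, r₂) 0 : ℝ) : EReal)
      = ((P ((2⁻¹ : ℝ) • (x₁ + x₂)) : ℝ) : EReal) -
          ((2⁻¹ * r₁ + 2⁻¹ * r₂ + 8⁻¹ * ‖x₁ - x₂‖ ^ 2 : ℝ) : EReal) := by
        rw [← EReal.coe_sub, proxObjective, add_zero]
        ring_nf
    _ ≤ _ := EReal.sub_le_sub le_rfl (proxAvg_half_smul_add_le hz.1 hz.2)

lemma exists_dual_le_proxObjective (hK : Convex ℝ (realEpigraph f₁ ×ˢ realEpigraph f₂))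
    (hne : (realEpigraph f₁ ×ˢ realEpigraph f₂).Nonempty) (P : StrongDual ℝ E) {a : ℝ}
    (ha : FnConjE (ProxAvg f₁ f₂) P ≤ a) :
    ∃ Q : StrongDual ℝ E, ∀ z ∈ realEpigraph f₁ ×ˢ realEpigraph f₂, ∀ y,
      Q y - a ≤ proxObjective P z y := by
  set K := realEpigraph f₁ ×ˢ realEpigraph f₂
  obtain ⟨z₀, hz₀⟩ := hne
  have hgap : ((0 : E), -a) ∉ {q : E × ℝ | ∃ z ∈ K, proxObjective P z q.1 < q.2} := by
    rintro ⟨z, hz, hlt⟩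
    have := (neg_proxObjective_le_fnConjE_proxAvg P hz).trans ha
    norm_cast at this
    linarith
  obtain ⟨Q, hQ⟩ := exists_dual_add_lt_of_isOpen_of_convex
    (isOpen_setOf_exists_lt (continuous_proxObjective P))
    (convex_setOf_exists_lt hK
      ((convexOn_proxObjective P).subset (Set.subset_univ _) (hK.prod convex_univ)))
    (lt_add_one (max (proxObjective P z₀ 0) (-a)) |>.trans_le' (le_max_right _ _))
    ⟨z₀, hz₀, (lt_add_one _).trans_le' (le_max_left _ _)⟩ hgap
  refine ⟨Q, fun z hz y => le_of_forall_gt fun t ht => ?_⟩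
  have := hQ (y, t) ⟨z, hz, ht⟩
  dsimp only at this
  linarith

lemma sub_two_smul_apply_add_add_two_smul_apply_le {Q P : StrongDual ℝ E} {a : ℝ}
    (hQ : ∀ z ∈ realEpigraph f₁ ×ˢ realEpigraph f₂, ∀ y, Q y - a ≤ proxObjective P z y)
    (x₁ x₂ : E) (r₁ r₂ : ℝ) (h₁ : f₁ x₁ ≤ r₁) (h₂ : f₂ x₂ ≤ r₂) :
    (P - (2 : ℝ) • Q) x₁ - r₁ + ((P + (2 : ℝ) • Q) x₂ - r₂) ≤ 2 * a - 4 * ‖Q‖ ^ 2 := by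
  refine le_of_forall_pos_lt_add fun ε hε => ?_
  obtain ⟨z, hz⟩ := exists_apply_sub_sq_norm_gt Q (half_pos hε)
  have hQz := hQ ((x₁, r₁), (x₂, r₂)) ⟨h₁, h₂⟩ (z - x₁ + x₂)
  rw [proxObjective, show x₁ - x₂ + (z - x₁ + x₂) = z by abel] at hQz
  simp only [sub_apply, add_apply, smul_apply, map_add, map_sub, map_smul, smul_eq_mul]
    at hQz ⊢
  linarith

end ProxObjective

section ProximalAverage

variable {E : Type*} [NormedAddCommGroup E] [NormedSpace ℝ E] {f₁ f₂ : E → EReal}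

lemma fnConjE_proxAvg_le (hf₁ : ∀ x, f₁ x ≠ ⊥) (hf₂ : ∀ x, f₂ x ≠ ⊥) (P : StrongDual ℝ E) :
    FnConjE (ProxAvg f₁ f₂) P ≤ ProxAvg (FnConjE f₁) (FnConjE f₂) P := by
  refine iSup_le fun x => le_iInf fun ⟨(P₁, P₂), hP⟩ => ?_
  rw [ProxAvg, EReal.coe_sub_le_comm]
  refine le_iInf fun ⟨(x₁, x₂), hx⟩ => ?_
  rw [← EReal.coe_sub_le_comm]
  dsimp only at hP hx ⊢
  subst hP hx
  have hconj₁ : ((P₁ x₁ : ℝ) : EReal) - f₁ x₁ ≤ FnConjE f₁ P₁ := le_iSup_of_le x₁ le_rfl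
  have hconj₂ : ((P₂ x₂ : ℝ) : EReal) - f₂ x₂ ≤ FnConjE f₂ P₂ := le_iSup_of_le x₂ le_rfl
  have hcoupling := half_smul_add_apply_half_smul_add_le P₁ P₂ x₁ x₂
  generalize ((2⁻¹ : ℝ) • (P₁ + P₂)) ((2⁻¹ : ℝ) • (x₁ + x₂)) = a at hcoupling ⊢
  generalize 8⁻¹ * ‖x₁ - x₂‖ ^ 2 = c at hcoupling ⊢
  have hA := hf₁ x₁
  have hB := hf₂ x₂
  generalize f₁ x₁ = A at hA hconj₁ ⊢
  generalize f₂ x₂ = B at hB hconj₂ ⊢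
  -- If `A` or `B` is `⊤`, the left-hand side is `a - ⊤ = ⊥`.
  induction A with
  | bot => exact absurd rfl hA
  | top =>
    induction B with
    | bot => exact absurd rfl hB
    | top | coe =>
      rw [EReal.coe_mul_top_of_pos (by norm_num)]
      simp [← EReal.coe_mul]
  | coe r₁ =>
    induction B with
    | bot => exact absurd rfl hB
    | top =>
      rw [EReal.coe_mul_top_of_pos (by norm_num)]
      simp [← EReal.coe_mul]
    | coe r₂ =>
      calc _ ≤ ((2⁻¹ : ℝ) : EReal) * ((P₁ x₁ : ℝ) - r₁) + ((2⁻¹ : ℝ) : EReal) * ((P₂ x₂ : ℝ) - r₂)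
            + ((8⁻¹ * ‖P₁ - P₂‖ ^ 2 : ℝ) : EReal) := by
            norm_cast
            linarith
        _ ≤ _ := by gcongr

lemma proxAvg_fnConjE_le (hK : Convex ℝ (realEpigraph f₁ ×ˢ realEpigraph f₂))
    (hne : (realEpigraph f₁ ×ˢ realEpigraph f₂).Nonempty) (P : StrongDual ℝ E) :
    ProxAvg (FnConjE f₁) (FnConjE f₂) P ≤ FnConjE (ProxAvg f₁ f₂) P := by
  rcases eq_or_ne (FnConjE (ProxAvg f₁ f₂) P) ⊤ with htop | hne_top
  · exact htop ▸ le_top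
  have hne_bot : FnConjE (ProxAvg f₁ f₂) P ≠ ⊥ :=
    ne_bot_of_le_ne_bot (EReal.coe_ne_bot _) (neg_proxObjective_le_fnConjE_proxAvg P hne.some_mem)
  obtain ⟨a, ha⟩ : ∃ a : ℝ, FnConjE (ProxAvg f₁ f₂) P = a :=
    ⟨_, (EReal.coe_toReal hne_top hne_bot).symm⟩
  obtain ⟨Q, hQ⟩ := exists_dual_le_proxObjective hK hne P ha.le
  set P₁ := P - (2 : ℝ) • Q
  set P₂ := P + (2 : ℝ) • Q
  have hsum : FnConjE f₁ P₁ + FnConjE f₂ P₂ ≤ ((2 * a - 4 * ‖Q‖ ^ 2 : ℝ) : EReal) :=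
    fnConjE_add_fnConjE_le (sub_two_smul_apply_add_add_two_smul_apply_le hQ)
  have hdiff : ‖P₁ - P₂‖ = 4 * ‖Q‖ := by
    rw [show P₁ - P₂ = (-4 : ℝ) • Q by module, norm_smul]
    norm_num
  have hhalf : (0 : EReal) ≤ ((2⁻¹ : ℝ) : EReal) := EReal.coe_nonneg.mpr (by norm_num)
  rw [ha]
  calc ProxAvg (FnConjE f₁) (FnConjE f₂) P
      ≤ ((2⁻¹ : ℝ) : EReal) * FnConjE f₁ P₁ + ((2⁻¹ : ℝ) : EReal) * FnConjE f₂ P₂ +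
          ((8⁻¹ * ‖P₁ - P₂‖ ^ 2 : ℝ) : EReal) :=
        iInf_le_of_le ⟨(P₁, P₂), by module⟩ le_rfl
    _ = ((2⁻¹ : ℝ) : EReal) * (FnConjE f₁ P₁ + FnConjE f₂ P₂) + ((2 * ‖Q‖ ^ 2 : ℝ) : EReal) := by
        rw [EReal.left_distrib_of_nonneg_of_ne_top hhalf (EReal.coe_ne_top _), hdiff]
        ring_nf
    _ ≤ ((2⁻¹ : ℝ) : EReal) * ((2 * a - 4 * ‖Q‖ ^ 2 : ℝ) : EReal) +
          ((2 * ‖Q‖ ^ 2 : ℝ) : EReal) := by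
        gcongr
    _ = a := by
        norm_cast
        ring_nf

end ProximalAverage

theorem stmt11_general {E : Type*} [NormedAddCommGroup E] [NormedSpace ℝ E]
    (f₁ f₂ : E → EReal)
    (hproper₁ : (∃ z, f₁ z ≠ ⊤) ∧ ∀ z, f₁ z ≠ ⊥)
    (hproper₂ : (∃ z, f₂ z ≠ ⊤) ∧ ∀ z, f₂ z ≠ ⊥)
    (hconv₁ : ∀ a b : E, ∀ t : ℝ, 0 ≤ t → t ≤ 1 →
      f₁ (t • a + (1 - t) • b) ≤ (t : EReal) * f₁ a + ((1 - t : ℝ) : EReal) * f₁ b)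
    (hconv₂ : ∀ a b : E, ∀ t : ℝ, 0 ≤ t → t ≤ 1 →
      f₂ (t • a + (1 - t) • b) ≤ (t : EReal) * f₂ a + ((1 - t : ℝ) : EReal) * f₂ b) :
    ∀ P : StrongDual ℝ E, FnConjE (ProxAvg f₁ f₂) P = ProxAvg (FnConjE f₁) (FnConjE f₂) P := by
  intro P
  have hK := (convex_realEpigraph hconv₁).prod (convex_realEpigraph hconv₂)
  have hne := (realEpigraph_nonempty hproper₁.1).prod (realEpigraph_nonempty hproper₂.1)
  exact le_antisymm (fnConjE_proxAvg_le hproper₁.2 hproper₂.2 P) (proxAvg_fnConjE_le hK hne P)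

/-- The Legendre dual of the proximal average of two proper convex
lsc functions `f₁, f₂` on a reflexive Banach space `E` is the proximal average of
`f₁*` and `f₂*` on `E*`. -/
theorem stmt11 {E : Type*} [NormedAddCommGroup E] [NormedSpace ℝ E] [CompleteSpace E]
    (hrefl : Function.Surjective (NormedSpace.inclusionInDoubleDual ℝ E))
    (f₁ f₂ : E → EReal)
    (hproper₁ : (∃ z, f₁ z ≠ ⊤) ∧ ∀ z, f₁ z ≠ ⊥)
    (hproper₂ : (∃ z, f₂ z ≠ ⊤) ∧ ∀ z, f₂ z ≠ ⊥)
    (hconv₁ : ∀ a b : E, ∀ t : ℝ, 0 ≤ t → t ≤ 1 →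
      f₁ (t • a + (1 - t) • b) ≤ (t : EReal) * f₁ a + ((1 - t : ℝ) : EReal) * f₁ b)
    (hconv₂ : ∀ a b : E, ∀ t : ℝ, 0 ≤ t → t ≤ 1 →
      f₂ (t • a + (1 - t) • b) ≤ (t : EReal) * f₂ a + ((1 - t : ℝ) : EReal) * f₂ b)
    (hlsc₁ : LowerSemicontinuous f₁) (hlsc₂ : LowerSemicontinuous f₂) :
    ∀ P : StrongDual ℝ E, FnConjE (ProxAvg f₁ f₂) P = ProxAvg (FnConjE f₁) (FnConjE f₂) P :=
  stmt11_general f₁ f₂ hproper₁ hproper₂ hconv₁ hconv₂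
end

section
/- Every maximal monotone operator T with nonempty domain on a reflexive separable Banach space X admits a selfdual Lagrangian N on X × X* with T = ∂̄N, i.e., p ∈ Tx if and only if N(x,p) = ⟨x,p⟩. -/
/-!
Conjugation `f ↦ f*` with respect to the symmetric pairing `⟪(x, p), (y, q)⟫ = p y + q x` on
`X × X*` is antitone and satisfies `f*** = f*`. The Fitzpatrick function `F` of a monotone `T`
(the conjugate of the graph indicator `(x, p) ↦ p x`) satisfies `F ≤ F*`. By Zorn's lemma there is
a maximal `v ≥ F` with `v** = v` and `v ≤ v*`; maximality means that `v*` lies below every `g ≤ v*`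
with `g* ≤ g`. Testing this against the midpoint of `v` and `v*` (conjugation is convex) gives
`v* ≤ v` wherever `v*` is finite, and testing it against `v ⊔ (⟪z, ·⟫ - v z)` shows that `v*` is
finite wherever `v` is. So `v* = v`. A selfdual `v ≥ F` lies below `F* ≤ (graph indicator)**`,
hence below `p x` on the graph of `T`, and above `⟪z, z⟫ / 2 = p x` everywhere; conversely
`v (x, p) = p x` forces `F (x, p) ≤ p x`, which by maximal monotonicity means `p ∈ T x`.
-/

open NormedSpace

namespace EReal

lemma bot_div_two : (⊥ : EReal) / 2 = ⊥ := bot_div_of_pos_ne_top (by norm_num) (by decide)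

lemma top_div_two : (⊤ : EReal) / 2 = ⊤ := top_div_of_pos_ne_top (by norm_num) (by decide)

lemma coe_add_div_two (a b : ℝ) : ((a : EReal) + b) / 2 = ((a + b) / 2 : ℝ) := by
  norm_cast

lemma coe_sub_le_comm_s13 (a : ℝ) {c d : EReal} (h : (a : EReal) - d ≤ c) : (a : EReal) - c ≤ d := by
  induction c <;> induction d <;> simp_all [← coe_sub]
  linarith

lemma coe_div_two_le_of_coe_sub_le (a : ℝ) {x : EReal} (h : (a : EReal) - x ≤ x) :
    ((a / 2 : ℝ) : EReal) ≤ x := by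
  induction x <;> simp_all [← coe_sub]
  linarith

lemma add_div_two_le_left {a b : EReal} (hb : ⊥ < b) (h : b ≤ a) : (a + b) / 2 ≤ a := by
  induction a <;> induction b <;> simp_all [top_div_two, coe_add_div_two]
  linarith

lemma le_of_le_add_div_two {a b : EReal} (ha : a ≠ ⊤) (hb : ⊥ < b) (h : a ≤ (a + b) / 2) :
    a ≤ b := by
  induction a <;> induction b <;> simp_all [top_div_two, coe_add_div_two]
  linarith

lemma coe_sub_add_div_two_le (c : ℝ) {p q r s : EReal} (hp : ⊥ < p) (hq : ⊥ < q)
    (h₁ : (c : EReal) - p ≤ r) (h₂ : (c : EReal) - q ≤ s) :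
    (c : EReal) - (p + q) / 2 ≤ (r + s) / 2 := by
  induction p <;> induction q <;> induction r <;> induction s <;>
    simp_all [← coe_sub, bot_div_two, top_div_two, coe_add_div_two]
  linarith

end EReal

section FenchelConj

variable {Z : Type*}

noncomputable def fenchelConj (b : Z → Z → ℝ) (f : Z → EReal) : Z → EReal :=
  fun z => ⨆ w, (b z w : EReal) - f w

variable {b : Z → Z → ℝ}

lemma coe_sub_le_fenchelConj (f : Z → EReal) (z w : Z) :
    (b z w : EReal) - f w ≤ fenchelConj b f z :=
  le_iSup (fun w => (b z w : EReal) - f w) w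

lemma fenchelConj_le {f : Z → EReal} {z : Z} {c : EReal}
    (h : ∀ w, (b z w : EReal) - f w ≤ c) : fenchelConj b f z ≤ c :=
  iSup_le h

lemma fenchelConj_antitone : Antitone (fenchelConj b) :=
  fun _ _ h _ => iSup_mono fun w => EReal.sub_le_sub le_rfl (h w)

lemma fenchelConj_fenchelConj_le (hb : ∀ z w, b z w = b w z) (f : Z → EReal) :
    fenchelConj b (fenchelConj b f) ≤ f := fun z =>
  fenchelConj_le fun w =>
    EReal.coe_sub_le_comm_s13 _ (hb z w ▸ coe_sub_le_fenchelConj f w z)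

lemma fenchelConj_fenchelConj_fenchelConj (hb : ∀ z w, b z w = b w z) (f : Z → EReal) :
    fenchelConj b (fenchelConj b (fenchelConj b f)) = fenchelConj b f :=
  le_antisymm (fenchelConj_fenchelConj_le hb _)
    (fenchelConj_antitone (fenchelConj_fenchelConj_le hb f))

lemma fenchelConj_add_div_two_le {f g : Z → EReal} (hf : ∀ z, ⊥ < f z) (hg : ∀ z, ⊥ < g z) :
    fenchelConj b (fun z => (f z + g z) / 2) ≤
      fun z => (fenchelConj b f z + fenchelConj b g z) / 2 := fun z =>
  fenchelConj_le fun w => EReal.coe_sub_add_div_two_le _ (hf w) (hg w)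
    (coe_sub_le_fenchelConj f z w) (coe_sub_le_fenchelConj g z w)

lemma coe_div_two_le_of_fenchelConj_eq {v : Z → EReal} (hv : fenchelConj b v = v) (z : Z) :
    ((b z z / 2 : ℝ) : EReal) ≤ v z := by
  have h := coe_sub_le_fenchelConj (b := b) v z z
  rw [hv] at h
  exact EReal.coe_div_two_le_of_coe_sub_le _ h

end FenchelConj

section Selfdual

variable {Z : Type*}

def subdualAbove (b : Z → Z → ℝ) (f : Z → EReal) : Set (Z → EReal) :=
  {v | f ≤ v ∧ fenchelConj b (fenchelConj b v) = v ∧ v ≤ fenchelConj b v}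

variable {b : Z → Z → ℝ} {f v : Z → EReal}

lemma exists_maximal_subdualAbove (hb : ∀ z w, b z w = b w z) (hf : f ∈ subdualAbove b f) :
    ∃ v, Maximal (· ∈ subdualAbove b f) v := by
  suffices h : ∀ C ⊆ subdualAbove b f, IsChain (· ≤ ·) C → ∀ g ∈ C,
      ∃ ub ∈ subdualAbove b f, ∀ u ∈ C, u ≤ ub by
    obtain ⟨v, -, hv⟩ := zorn_le_nonempty₀ _ h f hf
    exact ⟨v, hv⟩
  intro C hC hchain g hg
  have hcross : ∀ u ∈ C, ∀ w ∈ C, u ≤ fenchelConj b w := by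
    intro u hu w hw
    rcases hchain.total hu hw with h | h
    · exact h.trans (hC hw).2.2
    · exact (hC hu).2.2.trans (fenchelConj_antitone h)
  have hsup : sSup C ≤ fenchelConj b (sSup C) := sSup_le fun u hu =>
    (hC hu).2.1.symm.le.trans (fenchelConj_antitone (sSup_le fun w hw => hcross w hw u hu))
  -- `sSup C` need not equal its biconjugate, so the upper bound is `(sSup C)**`.
  have hub : ∀ u ∈ C, u ≤ fenchelConj b (fenchelConj b (sSup C)) := fun u hu =>
    (hC hu).2.1.symm.le.trans (fenchelConj_antitone (fenchelConj_antitone (le_sSup hu)))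
  refine ⟨_, ⟨(hC hg).1.trans (hub g hg), fenchelConj_fenchelConj_fenchelConj hb _, ?_⟩, hub⟩
  rw [fenchelConj_fenchelConj_fenchelConj hb]
  exact fenchelConj_antitone hsup

lemma fenchelConj_le_of_maximal (hb : ∀ z w, b z w = b w z)
    (hv : Maximal (· ∈ subdualAbove b f) v) {g : Z → EReal} (hgv : g ≤ fenchelConj b v)
    (hg : fenchelConj b g ≤ g) : fenchelConj b v ≤ g := by
  have hvg : v ≤ fenchelConj b g := hv.1.2.1.symm.le.trans (fenchelConj_antitone hgv)
  have hg_mem : fenchelConj b g ∈ subdualAbove b f :=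
    ⟨hv.1.1.trans hvg, fenchelConj_fenchelConj_fenchelConj hb g, fenchelConj_antitone hg⟩
  rw [← le_antisymm (hv.2 hg_mem hvg) hvg]
  exact fenchelConj_fenchelConj_le hb g

lemma fenchelConj_le_sup_of_maximal (hb : ∀ z w, b z w = b w z)
    (hv : Maximal (· ∈ subdualAbove b f) v) {w : Z → EReal} (hvw : v ≤ w)
    (hwv : w ≤ fenchelConj b v) : fenchelConj b v ≤ fenchelConj b w ⊔ w := by
  refine (fenchelConj_le_of_maximal hb hv (g := fenchelConj b w ⊔ fenchelConj b (fenchelConj b w))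
    ?_ ?_).trans (sup_le_sup_left (fenchelConj_fenchelConj_le hb w) _)
  · exact sup_le (fenchelConj_antitone hvw) ((fenchelConj_antitone (fenchelConj_antitone hwv)).trans
      (fenchelConj_fenchelConj_fenchelConj hb v).le)
  · exact (fenchelConj_antitone le_sup_left).trans le_sup_right

lemma fenchelConj_le_of_maximal_of_ne_top (hb : ∀ z w, b z w = b w z) (hf : ∀ z, ⊥ < f z)
    (hv : Maximal (· ∈ subdualAbove b f) v) {z : Z} (hz : fenchelConj b v z ≠ ⊤) :
    fenchelConj b v z ≤ v z := by
  have hv_bot : ∀ z, ⊥ < v z := fun z => (hf z).trans_le (hv.1.1 z)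
  have hJv_bot : ∀ z, ⊥ < fenchelConj b v z := fun z => (hv_bot z).trans_le (hv.1.2.2 z)
  have hg : fenchelConj b (fun z => (fenchelConj b v z + v z) / 2) ≤
      fun z => (fenchelConj b v z + v z) / 2 := by
    simpa only [hv.1.2.1, add_comm] using fenchelConj_add_div_two_le (b := b) hJv_bot hv_bot
  have hgv : (fun z => (fenchelConj b v z + v z) / 2) ≤ fenchelConj b v := fun z =>
    EReal.add_div_two_le_left (hv_bot z) (hv.1.2.2 z)
  exact EReal.le_of_le_add_div_two hz (hv_bot z) (fenchelConj_le_of_maximal hb hv hgv hg z)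

lemma eq_top_of_fenchelConj_eq_top_of_maximal (hb : ∀ z w, b z w = b w z) (hf : ∀ z, ⊥ < f z)
    (hv : Maximal (· ∈ subdualAbove b f) v) {z : Z} (hz : fenchelConj b v z = ⊤) : v z = ⊤ := by
  by_contra hvz
  obtain ⟨c, hc⟩ : ∃ c : ℝ, v z = c :=
    ⟨(v z).toReal, (EReal.coe_toReal hvz ((hf z).trans_le (hv.1.1 z)).ne').symm⟩
  set w : Z → EReal := v ⊔ fun y => ((b z y - c : ℝ) : EReal)
  have hwv : w ≤ fenchelConj b v := sup_le hv.1.2.2 fun y => by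
    have h := coe_sub_le_fenchelConj (b := b) (fenchelConj b v) z y
    rw [hv.1.2.1, hc] at h
    rw [EReal.coe_sub]
    exact EReal.coe_sub_le_comm_s13 _ h
  have hJw : fenchelConj b w z ≤ c := fenchelConj_le fun y => calc
    (b z y : EReal) - w y ≤ b z y - ((b z y - c : ℝ) : EReal) :=
      EReal.sub_le_sub le_rfl le_sup_right
    _ = c := by rw [← EReal.coe_sub, sub_sub_cancel]
  have hwz : w z < ⊤ := sup_lt_iff.2 ⟨hc ▸ EReal.coe_lt_top c, EReal.coe_lt_top _⟩
  have h := fenchelConj_le_sup_of_maximal hb hv le_sup_left hwv z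
  rw [hz, top_le_iff] at h
  exact (sup_lt_iff.2 ⟨hJw.trans_lt (EReal.coe_lt_top c), hwz⟩).ne h

lemma fenchelConj_eq_of_maximal (hb : ∀ z w, b z w = b w z) (hf : ∀ z, ⊥ < f z)
    (hv : Maximal (· ∈ subdualAbove b f) v) : fenchelConj b v = v := funext fun z => by
  by_cases hz : fenchelConj b v z = ⊤
  · rw [hz, eq_top_of_fenchelConj_eq_top_of_maximal hb hf hv hz]
  · exact le_antisymm (fenchelConj_le_of_maximal_of_ne_top hb hf hv hz) (hv.1.2.2 z)

theorem exists_le_fenchelConj_eq (hb : ∀ z w, b z w = b w z)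
    (hff : fenchelConj b (fenchelConj b f) = f) (hf : f ≤ fenchelConj b f) (hf_bot : ∀ z, ⊥ < f z) :
    ∃ v, f ≤ v ∧ fenchelConj b v = v := by
  obtain ⟨v, hv⟩ := exists_maximal_subdualAbove hb ⟨le_rfl, hff, hf⟩
  exact ⟨v, hv.1.1, fenchelConj_eq_of_maximal hb hf_bot hv⟩

end Selfdual

section MonotoneOperator

variable {X : Type*} [NormedAddCommGroup X] [NormedSpace ℝ X]

def dualPairing (z w : X × StrongDual ℝ X) : ℝ := z.2 w.1 + w.2 z.1

lemma dualPairing_comm (z w : X × StrongDual ℝ X) : dualPairing z w = dualPairing w z :=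
  add_comm _ _

lemma lagConj_eq_fenchelConj (N : X × StrongDual ℝ X → EReal) (x : X) (p : StrongDual ℝ X) :
    LagConj N p x = fenchelConj dualPairing N (x, p) := rfl

open Classical in
noncomputable def graphLagrangian (T : X → Set (StrongDual ℝ X)) (z : X × StrongDual ℝ X) : EReal :=
  if z.2 ∈ T z.1 then ((z.2 z.1 : ℝ) : EReal) else ⊤

noncomputable def fitzpatrick (T : X → Set (StrongDual ℝ X)) : X × StrongDual ℝ X → EReal :=
  fenchelConj dualPairing (graphLagrangian T)

variable {T : X → Set (StrongDual ℝ X)}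

lemma graphLagrangian_of_mem {x : X} {p : StrongDual ℝ X} (hp : p ∈ T x) :
    graphLagrangian T (x, p) = ((p x : ℝ) : EReal) :=
  if_pos hp

lemma coe_sub_le_fitzpatrick {x y : X} {p q : StrongDual ℝ X} (hq : q ∈ T y) :
    ((p y + q x - q y : ℝ) : EReal) ≤ fitzpatrick T (x, p) := by
  have h := coe_sub_le_fenchelConj (b := dualPairing) (graphLagrangian T) (x, p) (y, q)
  rwa [graphLagrangian_of_mem hq, ← EReal.coe_sub] at h

lemma fitzpatrick_le_graphLagrangian
    (hmono : ∀ x y : X, ∀ p q : StrongDual ℝ X, p ∈ T x → q ∈ T y → 0 ≤ (p - q) (x - y)) :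
    fitzpatrick T ≤ graphLagrangian T := by
  rintro ⟨x, p⟩
  by_cases hp : p ∈ T x
  · rw [graphLagrangian_of_mem hp]
    refine fenchelConj_le fun ⟨y, q⟩ => ?_
    by_cases hq : q ∈ T y
    · rw [graphLagrangian_of_mem hq, ← EReal.coe_sub, EReal.coe_le_coe_iff]
      have := hmono x y p q hp hq
      simp only [dualPairing, sub_apply, map_sub] at this ⊢
      linarith
    · simp [graphLagrangian, hq]
  · simp [graphLagrangian, hp]

lemma bot_lt_fitzpatrick {x₀ : X} {p₀ : StrongDual ℝ X} (hp₀ : p₀ ∈ T x₀)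
    (z : X × StrongDual ℝ X) : ⊥ < fitzpatrick T z :=
  (EReal.bot_lt_coe _).trans_le (coe_sub_le_fitzpatrick hp₀)

lemma mem_of_fitzpatrick_le
    (hmax : ∀ x : X, ∀ p : StrongDual ℝ X,
      (∀ y : X, ∀ q : StrongDual ℝ X, q ∈ T y → 0 ≤ (p - q) (x - y)) → p ∈ T x)
    {x : X} {p : StrongDual ℝ X} (h : fitzpatrick T (x, p) ≤ ((p x : ℝ) : EReal)) : p ∈ T x := by
  refine hmax x p fun y q hq => ?_
  have := EReal.coe_le_coe_iff.1 ((coe_sub_le_fitzpatrick hq).trans h)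
  simp only [sub_apply, map_sub]
  linarith

end MonotoneOperator

theorem stmt13_general {X : Type*} [NormedAddCommGroup X] [NormedSpace ℝ X]
    (T : X → Set (StrongDual ℝ X))
    (hmono : ∀ x y : X, ∀ p q : StrongDual ℝ X, p ∈ T x → q ∈ T y → 0 ≤ (p - q) (x - y))
    (hmax : ∀ x : X, ∀ p : StrongDual ℝ X,
      (∀ y : X, ∀ q : StrongDual ℝ X, q ∈ T y → 0 ≤ (p - q) (x - y)) → p ∈ T x)
    (hdom : ∃ x, (T x).Nonempty) :
    ∃ N : X × StrongDual ℝ X → EReal,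
      (∀ x p, LagConj N p x = N (x, p)) ∧
      (∀ x p, p ∈ T x ↔ N (x, p) = ((p x : ℝ) : EReal)) := by
  obtain ⟨x₀, p₀, hp₀⟩ := hdom
  have hF := fitzpatrick_le_graphLagrangian hmono
  obtain ⟨N, hFN, hN⟩ := exists_le_fenchelConj_eq dualPairing_comm
    (fenchelConj_fenchelConj_fenchelConj dualPairing_comm _) (fenchelConj_antitone hF)
    (bot_lt_fitzpatrick hp₀)
  refine ⟨N, fun x p => by rw [lagConj_eq_fenchelConj, hN], fun x p => ⟨fun hp => ?_, fun h =>
    mem_of_fitzpatrick_le hmax (h ▸ hFN (x, p))⟩⟩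
  refine le_antisymm ?_ ?_
  · calc N (x, p) = fenchelConj dualPairing N (x, p) := by rw [hN]
      _ ≤ fenchelConj dualPairing (fitzpatrick T) (x, p) := fenchelConj_antitone hFN _
      _ ≤ graphLagrangian T (x, p) := fenchelConj_fenchelConj_le dualPairing_comm _ _
      _ = p x := graphLagrangian_of_mem hp
  · have h := coe_div_two_le_of_fenchelConj_eq hN (x, p)
    rwa [dualPairing, add_self_div_two] at h

/-- Every maximal monotone operator `T` with nonempty domain on a
reflexive separable Banach space `X` admits a selfdual Lagrangian `N` on
`X × X*` such that `T = ∂̄N`, i.e., `p ∈ Tx ↔ N(x,p) = ⟨x,p⟩`. -/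
theorem stmt13 {X : Type*} [NormedAddCommGroup X] [NormedSpace ℝ X] [CompleteSpace X]
    [TopologicalSpace.SeparableSpace X]
    (hrefl : Function.Surjective (NormedSpace.inclusionInDoubleDual ℝ X))
    (T : X → Set (StrongDual ℝ X))
    (hmono : ∀ x y : X, ∀ p q : StrongDual ℝ X, p ∈ T x → q ∈ T y → 0 ≤ (p - q) (x - y))
    (hmax : ∀ x : X, ∀ p : StrongDual ℝ X,
      (∀ y : X, ∀ q : StrongDual ℝ X, q ∈ T y → 0 ≤ (p - q) (x - y)) → p ∈ T x)
    (hdom : ∃ x, (T x).Nonempty) :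
    ∃ N : X × StrongDual ℝ X → EReal,
      (∀ x p, LagConj N p x = N (x, p)) ∧
      (∀ x p, p ∈ T x ↔ N (x, p) = ((p x : ℝ) : EReal)) :=
  stmt13_general T hmono hmax hdom
end

section
/- If L is a selfdual Lagrangian on X × X* and Λ : X → X* is a bounded skew-adjoint linear operator (⟨Λx, y⟩ = −⟨Λy, x⟩), then M(x,p) := L(x, −Λx + p) is a selfdual Lagrangian, and ∂̄M(x) = Λx + ∂̄L(x). -/
open NormedSpace

/-! The shear `(y, q) ↦ (y, Λy + q)` is a bijection of `X × X*`, and substituting it in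
the supremum defining `M*` turns `M*(p, x)` into `L*(-Λx + p, x)`: skew-adjointness converts the
pairing `⟨Λy, x⟩` into `-⟨Λx, y⟩`. Self-duality of `L` then gives self-duality of `M`. The
description of `∂̄M` follows from `⟨Λx, x⟩ = 0`. -/

section SkewShear

variable {X : Type*} [NormedAddCommGroup X] [NormedSpace ℝ X]

theorem apply_self_eq_zero_of_skew {Lam : X →L[ℝ] StrongDual ℝ X}
    (hskew : ∀ x y : X, Lam x y = -Lam y x) (x : X) : Lam x x = 0 := by
  linarith [hskew x x]

theorem lagConj_shear (L : X × StrongDual ℝ X → EReal) {Lam : X →L[ℝ] StrongDual ℝ X}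
    (hskew : ∀ x y : X, Lam x y = -Lam y x) (p : StrongDual ℝ X) (x : X) :
    LagConj (fun z => L (z.1, -Lam z.1 + z.2)) p x = LagConj L (-Lam x + p) x := by
  unfold LagConj
  rw [← ((Equiv.refl X).prodShear fun y => Equiv.addLeft (Lam y)).iSup_comp]
  congr with ⟨y, q⟩
  have hpair : p y + (Lam y + q) x = (-Lam x + p) y + q x := by
    simp only [add_apply, neg_apply, hskew y x]
    ring
  simp only [Equiv.prodShear_apply, Equiv.refl_apply, Equiv.coe_addLeft, neg_add_cancel_left, hpair]

theorem shear_eq_pairing_iff (L : X × StrongDual ℝ X → EReal) {Lam : X →L[ℝ] StrongDual ℝ X}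
    (hskew : ∀ x y : X, Lam x y = -Lam y x) (x : X) (p : StrongDual ℝ X) :
    L (x, -Lam x + p) = ((p x : ℝ) : EReal) ↔
      ∃ q : StrongDual ℝ X, L (x, q) = ((q x : ℝ) : EReal) ∧ p = Lam x + q := by
  have hpair (q : StrongDual ℝ X) : (Lam x + q) x = q x := by
    simp [apply_self_eq_zero_of_skew hskew x]
  constructor
  · intro h
    refine ⟨-Lam x + p, ?_, by abel⟩
    rw [h, ← hpair (-Lam x + p), add_neg_cancel_left]
  · rintro ⟨q, hq, rfl⟩
    rw [neg_add_cancel_left, hq, hpair]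

end SkewShear

theorem stmt15_general {X : Type*} [NormedAddCommGroup X] [NormedSpace ℝ X]
    (L : X × StrongDual ℝ X → EReal)
    (hself : ∀ x p, LagConj L p x = L (x, p))
    (Lam : X →L[ℝ] StrongDual ℝ X)
    (hskew : ∀ x y : X, Lam x y = - Lam y x)
    (M : X × StrongDual ℝ X → EReal)
    (hM : ∀ x p, M (x, p) = L (x, -Lam x + p)) :
    (∀ x p, LagConj M p x = M (x, p)) ∧
    (∀ x : X, ∀ p : StrongDual ℝ X,
      (M (x, p) = ((p x : ℝ) : EReal) ↔
        ∃ q : StrongDual ℝ X, L (x, q) = ((q x : ℝ) : EReal) ∧ p = Lam x + q)) := by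
  obtain rfl : M = fun z => L (z.1, -Lam z.1 + z.2) := funext fun z => hM z.1 z.2
  exact ⟨fun x p => by rw [lagConj_shear L hskew, hself],
    fun x p => shear_eq_pairing_iff L hskew x p⟩

/-- If `L` is selfdual and `Λ : X → X*` is a bounded skew-adjoint
linear operator, then `M(x,p) = L(x, −Λx + p)` is selfdual and
`∂̄M(x) = Λx + ∂̄L(x)`. -/
theorem stmt15 {X : Type*} [NormedAddCommGroup X] [NormedSpace ℝ X] [CompleteSpace X]
    (hrefl : Function.Surjective (NormedSpace.inclusionInDoubleDual ℝ X))
    (L : X × StrongDual ℝ X → EReal)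
    (hself : ∀ x p, LagConj L p x = L (x, p))
    (Lam : X →L[ℝ] StrongDual ℝ X)
    (hskew : ∀ x y : X, Lam x y = - Lam y x)
    (M : X × StrongDual ℝ X → EReal)
    (hM : ∀ x p, M (x, p) = L (x, -Lam x + p)) :
    (∀ x p, LagConj M p x = M (x, p)) ∧
    (∀ x : X, ∀ p : StrongDual ℝ X,
      (M (x, p) = ((p x : ℝ) : EReal) ↔
        ∃ q : StrongDual ℝ X, L (x, q) = ((q x : ℝ) : EReal) ∧ p = Lam x + q)) :=
  stmt15_general L hself Lam hskew M hM
end
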